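/- arXiv:0911.2201 — 11 statements merged into one kernel-verified Lean document; each statement's English description precedes it below -/
import Mathlib

section
/- Let μ be a Borel probability measure on ℝ, and define the survival amplitude A(s) = ∫_ℝ e^{−isλ} dμ(λ) and the survival probability p(s) = |A(s)|². Then the following three statements are equivalent: (1) Λ·μ((−Λ,Λ)ᶜ) → 0 as Λ → +∞; (2) p is differentiable at 0 with p'(0) = 0; (3) for every T > 0, sup_{|t|≤T} |p(t/N)^N − 1| → 0 as N → +∞ (i.e. [p(t/N)]^N → 1 uniformly for t in bounded intervals of ℝ). -/
/-!
Let `ν` be the law of `X - X'` for independent `X, X' ∼ μ` (`symmetrization μ`). Its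
characteristic function is `|A|² = p`, so `1 - p(t) = ∫ (1 - cos tλ) dν(λ)`, and the tails of `μ`
and `ν` are comparable. For a probability measure `ν` with characteristic function `φ`, the tail
condition `r ν(|λ| > r) → 0` gives `1 - Re φ(t) = o(t)`, by bounding `1 - cos` by
`2 min(t²λ², 1)` and computing `∫ min(λ², t⁻²) dν` with the layer-cake formula; conversely
`1 - φ(t) = o(t)` gives the tail condition through the classical estimate
`ν(|λ| > r) ≤ (r/2) |∫_{-2/r}^{2/r} (1 - φ)|`. Finally, for `0 ≤ p ≤ 1` the bounds
`n xⁿ (1 - x) ≤ 1 - xⁿ ≤ n (1 - x)` show that `p(t/N)^N → 1` locally uniformly exactly when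
`1 - p(s) = o(s)`.
-/

open MeasureTheory Filter Topology Asymptotics Set

lemma hasDerivAt_zero_iff_isLittleO_one_sub {p : ℝ → ℝ} (hp : p 0 = 1) :
    HasDerivAt p 0 0 ↔ (fun t => 1 - p t) =o[𝓝 0] fun t => t := by
  rw [hasDerivAt_iff_isLittleO, ← isLittleO_neg_left]
  simp [hp]

lemma one_sub_pow_le_mul_one_sub {x : ℝ} (h0 : 0 ≤ x) (h1 : x ≤ 1) (n : ℕ) :
    1 - x ^ n ≤ n * (1 - x) := by
  rw [← mul_neg_geom_sum, mul_comm (n : ℝ)]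
  gcongr
  simpa using Finset.sum_le_card_nsmul (Finset.range n) (x ^ ·) 1 fun i _ => pow_le_one₀ h0 h1

lemma mul_pow_mul_one_sub_le_one_sub_pow {x : ℝ} (h0 : 0 ≤ x) (h1 : x ≤ 1) (n : ℕ) :
    n * x ^ n * (1 - x) ≤ 1 - x ^ n := by
  rw [← mul_neg_geom_sum, mul_comm _ (1 - x)]
  gcongr
  simpa using Finset.card_nsmul_le_sum (Finset.range n) (x ^ ·) (x ^ n) fun i hi =>
    pow_le_pow_of_le_one h0 h1 (Finset.mem_range.1 hi).le

lemma one_sub_cos_le_two_mul_sq_mul_min_sq {t : ℝ} (ht : t ≠ 0) (x : ℝ) :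
    1 - Real.cos (t * x) ≤ 2 * t ^ 2 * min |x| |t|⁻¹ ^ 2 := by
  rcases le_total |x| |t|⁻¹ with hx | hx
  · rw [min_eq_left hx]
    nlinarith [Real.one_sub_sq_div_two_le_cos (x := t * x), sq_abs x, sq_nonneg (t * x)]
  · rw [min_eq_right hx, inv_pow, sq_abs, mul_assoc, mul_inv_cancel₀ (pow_ne_zero 2 ht)]
    linarith [Real.neg_one_le_cos (t * x)]

lemma integral_two_mul_id (a : ℝ) : ∫ t in (0 : ℝ)..a, 2 * t = a ^ 2 := by
  rw [intervalIntegral.integral_const_mul, integral_id]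
  ring

lemma lintegral_Ioc_ofReal_two_mul {M : ℝ} (hM : 0 ≤ M) :
    ∫⁻ t in Ioc 0 M, ENNReal.ofReal (2 * t) = ENNReal.ofReal (M ^ 2) := by
  rw [← ofReal_integral_eq_lintegral_ofReal, ← intervalIntegral.integral_of_le hM,
    integral_two_mul_id]
  · exact (continuous_const.mul continuous_id).integrableOn_Ioc
  · filter_upwards [ae_restrict_mem measurableSet_Ioc] with t ht
    simp only [Pi.zero_apply]
    linarith [ht.1]

lemma integrable_cos_mul {ν : Measure ℝ} [IsFiniteMeasure ν] (t : ℝ) :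
    Integrable (fun x => Real.cos (t * x)) ν :=
  .of_bound (by fun_prop) 1 (ae_of_all _ fun _ => Real.abs_cos_le_one _)

section CharFun

variable {ν : Measure ℝ} [IsProbabilityMeasure ν]

lemma one_sub_re_charFun (t : ℝ) :
    1 - (charFun ν t).re = ∫ x, (1 - Real.cos (t * x)) ∂ν := by
  have hexp : Integrable (fun x : ℝ => Complex.exp (t * x * Complex.I)) ν :=
    .of_bound (by fun_prop) 1 (ae_of_all _ fun x => by
      rw [← Complex.ofReal_mul, Complex.norm_exp_ofReal_mul_I])
  rw [integral_sub (integrable_const 1) (integrable_cos_mul t), charFun_apply_real,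
    ← RCLike.re_to_complex, ← integral_re hexp]
  simp [← Complex.ofReal_mul, Complex.exp_ofReal_mul_I_re]

lemma lintegral_min_abs_sq_le {M ε L : ℝ} (hM : 0 ≤ M) (hL : 0 ≤ L)
    (htail : ∀ u ≥ M, u * ν.real {x | u < |x|} ≤ ε) :
    ∫⁻ x, ENNReal.ofReal (min |x| L ^ 2) ∂ν ≤ ENNReal.ofReal (M ^ 2 + 2 * ε * L) := by
  have hε : 0 ≤ ε := (mul_nonneg hM measureReal_nonneg).trans (htail M le_rfl)
  have hpoint : ∀ t ∈ Ioi (0 : ℝ), ν {x | t < min |x| L} * ENNReal.ofReal (2 * t) ≤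
      (Iic M).indicator (fun t => ENNReal.ofReal (2 * t)) t +
        (Iio L).indicator (fun _ => ENNReal.ofReal (2 * ε)) t := by
    intro t (ht : 0 < t)
    rcases lt_or_ge t L with htL | htL
    swap
    · have hempty : {x : ℝ | t < min |x| L} = ∅ :=
        eq_empty_of_forall_notMem fun x hx => (lt_min_iff.1 hx).2.not_ge htL
      rw [hempty, measure_empty, zero_mul]
      exact zero_le
    rw [indicator_of_mem (mem_Iio.2 htL)]
    rcases le_or_gt t M with htM | htM
    · rw [indicator_of_mem (mem_Iic.2 htM)]
      exact le_add_right (mul_le_of_le_one_left' prob_le_one)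
    · refine le_add_left ?_
      calc ν {x | t < min |x| L} * ENNReal.ofReal (2 * t)
          ≤ ENNReal.ofReal (ν.real {x | t < |x|}) * ENNReal.ofReal (2 * t) := by
            rw [ofReal_measureReal]
            gcongr
            exact min_le_left _ _
        _ = ENNReal.ofReal (2 * (t * ν.real {x | t < |x|})) := by
            rw [← ENNReal.ofReal_mul measureReal_nonneg]
            ring_nf
        _ ≤ ENNReal.ofReal (2 * ε) := by
            gcongr
            exact htail t htM.le
  calc ∫⁻ x, ENNReal.ofReal (min |x| L ^ 2) ∂ν
      = ∫⁻ t in Ioi 0, ν {x | t < min |x| L} * ENNReal.ofReal (2 * t) := by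
        simp_rw [← integral_two_mul_id]
        exact lintegral_comp_eq_lintegral_meas_lt_mul ν (ae_of_all _ fun x => by positivity)
          (by fun_prop) (fun _ _ => (continuous_const.mul continuous_id).intervalIntegrable _ _)
          ((ae_restrict_mem measurableSet_Ioi).mono fun t (ht : 0 < t) => by positivity)
    _ ≤ ∫⁻ t in Ioi 0, ((Iic M).indicator (fun t => ENNReal.ofReal (2 * t)) t +
          (Iio L).indicator (fun _ => ENNReal.ofReal (2 * ε)) t) :=
        setLIntegral_mono' measurableSet_Ioi hpoint
    _ = ENNReal.ofReal (M ^ 2) + ENNReal.ofReal (2 * ε) * ENNReal.ofReal L := by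
        rw [lintegral_add_right _ (measurable_const.indicator measurableSet_Iio),
          lintegral_indicator measurableSet_Iic, lintegral_indicator_const measurableSet_Iio,
          Measure.restrict_restrict measurableSet_Iic, Measure.restrict_apply measurableSet_Iio,
          Iic_inter_Ioi, Iio_inter_Ioi, lintegral_Ioc_ofReal_two_mul hM, Real.volume_Ioo,
          sub_zero]
    _ = ENNReal.ofReal (M ^ 2 + 2 * ε * L) := by
        rw [← ENNReal.ofReal_mul (by positivity),
          ← ENNReal.ofReal_add (by positivity) (by positivity)]

lemma integral_one_sub_cos_le {M ε : ℝ} (hM : 0 ≤ M)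
    (htail : ∀ u ≥ M, u * ν.real {x | u < |x|} ≤ ε) (t : ℝ) :
    ∫ x, (1 - Real.cos (t * x)) ∂ν ≤ 2 * t ^ 2 * M ^ 2 + 4 * ε * |t| := by
  rcases eq_or_ne t 0 with rfl | ht
  · simp
  have hmin : Integrable (fun x : ℝ => min |x| |t|⁻¹ ^ 2) ν :=
    .of_bound (by fun_prop) (|t|⁻¹ ^ 2) (ae_of_all _ fun x => by
      rw [Real.norm_eq_abs, abs_of_nonneg (by positivity)]
      gcongr
      exact min_le_right _ _)
  have hsq : ∫ x, min |x| |t|⁻¹ ^ 2 ∂ν ≤ M ^ 2 + 2 * ε * |t|⁻¹ := by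
    rw [integral_eq_lintegral_of_nonneg_ae (ae_of_all _ fun x => by positivity) (by fun_prop)]
    have hε : 0 ≤ ε := (mul_nonneg hM measureReal_nonneg).trans (htail M le_rfl)
    exact ENNReal.toReal_le_of_le_ofReal (by positivity)
      (lintegral_min_abs_sq_le hM (by positivity) htail)
  calc ∫ x, (1 - Real.cos (t * x)) ∂ν ≤ ∫ x, 2 * t ^ 2 * min |x| |t|⁻¹ ^ 2 ∂ν :=
        integral_mono ((integrable_const 1).sub (integrable_cos_mul t)) (hmin.const_mul _)
          (one_sub_cos_le_two_mul_sq_mul_min_sq ht)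
    _ ≤ 2 * t ^ 2 * (M ^ 2 + 2 * ε * |t|⁻¹) := by
        rw [integral_const_mul]
        gcongr
    _ = 2 * t ^ 2 * M ^ 2 + 4 * ε * |t| := by
        rw [← sq_abs t]
        field_simp
        ring

lemma isLittleO_one_sub_re_charFun
    (h : Tendsto (fun r => r * ν.real {x | r < |x|}) atTop (𝓝 0)) :
    (fun t => 1 - (charFun ν t).re) =o[𝓝 0] fun t => t := by
  refine isLittleO_iff.2 fun c hc => ?_
  obtain ⟨M, hM⟩ := eventually_atTop.1 (h.eventually (Iic_mem_nhds (by positivity : 0 < c / 8)))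
  set M' := max M 0
  have hδ : 0 < c / (4 * (M' ^ 2 + 1)) := by positivity
  filter_upwards [Metric.ball_mem_nhds 0 hδ] with t ht
  rw [mem_ball_zero_iff, Real.norm_eq_abs] at ht
  rw [one_sub_re_charFun, Real.norm_eq_abs, Real.norm_eq_abs,
    abs_of_nonneg (integral_nonneg fun x => sub_nonneg.2 (Real.cos_le_one _))]
  calc ∫ x, (1 - Real.cos (t * x)) ∂ν ≤ 2 * t ^ 2 * M' ^ 2 + 4 * (c / 8) * |t| :=
        integral_one_sub_cos_le (le_max_right M 0) (fun u hu => hM u (le_of_max_le_left hu)) t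
    _ ≤ c * |t| := by
        rw [lt_div_iff₀ (by positivity)] at ht
        nlinarith [sq_abs t, abs_nonneg t, sq_nonneg M']

lemma tendsto_mul_measureReal_abs_gt_of_isLittleO
    (h : (fun t => 1 - charFun ν t) =o[𝓝 0] fun t => t) :
    Tendsto (fun r => r * ν.real {x | r < |x|}) atTop (𝓝 0) := by
  rw [NormedAddGroup.tendsto_nhds_zero]
  intro ε hε
  obtain ⟨δ, hδ, hbound⟩ := Metric.eventually_nhds_iff.1 (h.bound (by positivity : 0 < ε / 8))
  filter_upwards [eventually_gt_atTop (2 / δ), eventually_gt_atTop 0] with r hrδ hr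
  have ha : 2 * r⁻¹ < δ := by
    rw [div_lt_iff₀ hδ] at hrδ
    rw [← div_eq_mul_inv, div_lt_iff₀ hr]
    linarith
  have hint : ‖∫ t in (-2 * r⁻¹)..(2 * r⁻¹), 1 - charFun ν t‖ ≤
      ε / 8 * (2 * r⁻¹) * (4 * r⁻¹) := by
    refine (intervalIntegral.norm_integral_le_of_norm_le_const (C := ε / 8 * (2 * r⁻¹))
      fun t ht => ?_).trans_eq ?_
    · have ht' : |t| ≤ 2 * r⁻¹ := by
        rw [uIoc_of_le (by nlinarith [inv_pos.2 hr])] at ht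
        exact abs_le.2 ⟨by linarith [ht.1], ht.2⟩
      refine (hbound (by simpa [Real.dist_eq] using ht'.trans_lt ha)).trans ?_
      rw [Real.norm_eq_abs]
      gcongr
    · rw [show 2 * r⁻¹ - -2 * r⁻¹ = 4 * r⁻¹ by ring, abs_of_pos (by positivity)]
  rw [Real.norm_eq_abs, abs_of_nonneg (by positivity)]
  calc r * ν.real {x | r < |x|} ≤ r * (2⁻¹ * r * (ε / 8 * (2 * r⁻¹) * (4 * r⁻¹))) := by
        gcongr
        exact (measureReal_abs_gt_le_integral_charFun hr).trans (by gcongr)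
    _ = ε / 2 := by field_simp; ring
    _ < ε := by linarith

end CharFun

noncomputable def symmetrization (μ : Measure ℝ) : Measure ℝ :=
  (μ.prod μ).map fun z => z.1 - z.2

section Symmetrization

variable (μ : Measure ℝ)

instance [IsProbabilityMeasure μ] : IsProbabilityMeasure (symmetrization μ) :=
  Measure.isProbabilityMeasure_map (by fun_prop)

lemma charFun_symmetrization [IsFiniteMeasure μ] (t : ℝ) :
    charFun (symmetrization μ) t = (‖charFun μ t‖ ^ 2 : ℝ) := by
  rw [Complex.ofReal_pow, ← Complex.mul_conj', ← charFun_neg, charFun_apply_real, symmetrization,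
    integral_map (by fun_prop) (by fun_prop), charFun_apply_real, charFun_apply_real,
    ← integral_prod_mul]
  congr with z
  rw [← Complex.exp_add]
  push_cast
  ring_nf

lemma measureReal_symmetrization_abs_gt_le [IsProbabilityMeasure μ] (r : ℝ) :
    (symmetrization μ).real {z | r < |z|} ≤ 2 * μ.real {x | r / 2 < |x|} := by
  have hsub : (fun z : ℝ × ℝ => z.1 - z.2) ⁻¹' {z | r < |z|} ⊆
      {x : ℝ | r / 2 < |x|} ×ˢ univ ∪ univ ×ˢ {x : ℝ | r / 2 < |x|} := by
    rintro ⟨x, y⟩ h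
    simp only [mem_preimage, mem_ofPred_eq] at h
    by_contra! hxy
    simp only [mem_union, mem_prod, mem_ofPred_eq, mem_univ, and_true, true_and, not_or,
      not_lt] at hxy
    linarith [abs_sub x y]
  calc (symmetrization μ).real {z | r < |z|}
      ≤ (μ.prod μ).real ({x : ℝ | r / 2 < |x|} ×ˢ univ)
        + (μ.prod μ).real (univ ×ˢ {x : ℝ | r / 2 < |x|}) := by
        rw [symmetrization, map_measureReal_apply (by fun_prop)
          (measurableSet_lt measurable_const measurable_abs)]
        exact (measureReal_mono hsub).trans (measureReal_union_le _ _)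
    _ = 2 * μ.real {x | r / 2 < |x|} := by
        simp only [measureReal_def, Measure.prod_prod, measure_univ, mul_one, one_mul]
        ring

lemma measureReal_abs_ge_mul_le_symmetrization [IsFiniteMeasure μ] (r K : ℝ) :
    μ.real {x | r ≤ |x|} * μ.real (Metric.ball 0 K) ≤
      (symmetrization μ).real {z | r - K < |z|} := by
  have hsub : {x : ℝ | r ≤ |x|} ×ˢ Metric.ball 0 K ⊆
      (fun z : ℝ × ℝ => z.1 - z.2) ⁻¹' {z | r - K < |z|} := by
    rintro ⟨x, y⟩ ⟨hx, hy⟩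
    simp only [mem_ofPred_eq, mem_ball_zero_iff, Real.norm_eq_abs] at hx hy
    simp only [mem_preimage, mem_ofPred_eq]
    linarith [abs_sub_abs_le_abs_sub x y]
  rw [symmetrization, map_measureReal_apply (by fun_prop)
    (measurableSet_lt measurable_const measurable_abs)]
  refine le_trans (le_of_eq ?_) (measureReal_mono hsub)
  simp only [measureReal_def, Measure.prod_prod, ENNReal.toReal_mul]

end Symmetrization

lemma tendsto_nhds_zero_of_le_comp {f g φ : ℝ → ℝ} (C : ℝ) (hφ : Tendsto φ atTop atTop)
    (hg : Tendsto g atTop (𝓝 0)) (hf : ∀ᶠ r in atTop, 0 ≤ f r)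
    (hle : ∀ᶠ r in atTop, f r ≤ C * g (φ r)) :
    Tendsto f atTop (𝓝 0) :=
  tendsto_of_tendsto_of_tendsto_of_le_of_le' tendsto_const_nhds
    (by simpa using (hg.comp hφ).const_mul C) hf hle

section Tails

variable {μ : Measure ℝ} [IsProbabilityMeasure μ]

lemma tendsto_mul_measureReal_symmetrization_of_tendsto
    (h : Tendsto (fun r => r * μ.real {x | r ≤ |x|}) atTop (𝓝 0)) :
    Tendsto (fun r => r * (symmetrization μ).real {z | r < |z|}) atTop (𝓝 0) := by
  refine tendsto_nhds_zero_of_le_comp 4 (tendsto_id.atTop_div_const two_pos) h ?_ ?_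
  · filter_upwards [eventually_ge_atTop 0] with r hr
    positivity
  · filter_upwards [eventually_ge_atTop 0] with r hr
    calc r * (symmetrization μ).real {z | r < |z|} ≤ r * (2 * μ.real {x | r / 2 ≤ |x|}) := by
          gcongr
          refine (measureReal_symmetrization_abs_gt_le μ r).trans ?_
          gcongr 2 * ?_
          exact measureReal_mono fun x (hx : r / 2 < |x|) => hx.le
      _ = 4 * (id r / 2 * μ.real {x | id r / 2 ≤ |x|}) := by
          rw [id]
          ring

lemma tendsto_mul_measureReal_of_tendsto_symmetrization
    (h : Tendsto (fun r => r * (symmetrization μ).real {z | r < |z|}) atTop (𝓝 0)) :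
    Tendsto (fun r => r * μ.real {x | r ≤ |x|}) atTop (𝓝 0) := by
  obtain ⟨n, hn⟩ := exists_pos_ball (μ := μ) 0 (IsProbabilityMeasure.ne_zero μ)
  set K : ℝ := (n : ℝ)
  set c := μ.real (Metric.ball 0 K)
  have hc : 0 < c := ENNReal.toReal_pos hn.ne' (measure_ne_top _ _)
  refine tendsto_nhds_zero_of_le_comp (2 / c) (tendsto_atTop_add_const_right _ (-K) tendsto_id)
    h ?_ ?_
  · filter_upwards [eventually_ge_atTop 0] with r hr
    positivity
  · filter_upwards [eventually_ge_atTop (2 * K)] with r hr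
    have hK : 0 ≤ K := Nat.cast_nonneg n
    have hprod := measureReal_abs_ge_mul_le_symmetrization μ r K
    rw [← le_div_iff₀ hc] at hprod
    calc r * μ.real {x | r ≤ |x|}
        ≤ 2 * (r - K) * ((symmetrization μ).real {z | r - K < |z|} / c) := by
          gcongr <;> linarith
      _ = 2 / c * ((id r + -K) * (symmetrization μ).real {z | id r + -K < |z|}) := by
          rw [id, ← sub_eq_add_neg]
          ring

end Tails

theorem tendsto_mul_measureReal_abs_ge_iff_hasDerivAt (μ : Measure ℝ) [IsProbabilityMeasure μ] :
    Tendsto (fun r => r * μ.real {x | r ≤ |x|}) atTop (𝓝 0) ↔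
      HasDerivAt (fun t => ‖charFun μ t‖ ^ 2) 0 0 := by
  rw [hasDerivAt_zero_iff_isLittleO_one_sub (by simp)]
  constructor
  · intro h
    simpa only [charFun_symmetrization, Complex.ofReal_re] using
      isLittleO_one_sub_re_charFun (tendsto_mul_measureReal_symmetrization_of_tendsto h)
  · intro h
    apply tendsto_mul_measureReal_of_tendsto_symmetrization
    apply tendsto_mul_measureReal_abs_gt_of_isLittleO
    simp_rw [charFun_symmetrization, ← Complex.ofReal_one, ← Complex.ofReal_sub]
    exact Complex.isLittleO_ofReal_left.2 h

section UniformLimit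

variable {p : ℝ → ℝ}

lemma tendstoUniformlyOn_pow_of_isLittleO (hp0 : ∀ t, 0 ≤ p t) (hp1 : ∀ t, p t ≤ 1)
    (h : (fun t => 1 - p t) =o[𝓝 0] fun t => t) {T : ℝ} (hT : 0 < T) :
    TendstoUniformlyOn (fun (N : ℕ) t => p (t / N) ^ N) (fun _ => 1) atTop (Icc (-T) T) := by
  rw [Metric.tendstoUniformlyOn_iff]
  intro ε hε
  obtain ⟨δ, hδ, hbound⟩ := Metric.eventually_nhds_iff.1 (h.bound (by positivity : 0 < ε / (2 * T)))
  filter_upwards [(tendsto_const_div_atTop_nhds_zero_nat T).eventually (gt_mem_nhds hδ),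
    eventually_gt_atTop 0] with N hNδ hN t ht
  have hN' : (0 : ℝ) < N := Nat.cast_pos.2 hN
  have htT : |t| ≤ T := abs_le.2 ht
  have hsmall : ‖1 - p (t / N)‖ ≤ ε / (2 * T) * ‖t / N‖ := by
    refine hbound ?_
    rw [Real.dist_eq, sub_zero, abs_div, Nat.abs_cast]
    exact lt_of_le_of_lt (by gcongr) hNδ
  rw [Real.norm_eq_abs, Real.norm_eq_abs, abs_of_nonneg (sub_nonneg.2 (hp1 _)), abs_div,
    Nat.abs_cast] at hsmall
  rw [Real.dist_eq, abs_of_nonneg (sub_nonneg.2 (pow_le_one₀ (hp0 _) (hp1 _)))]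
  calc 1 - p (t / N) ^ N ≤ N * (1 - p (t / N)) := one_sub_pow_le_mul_one_sub (hp0 _) (hp1 _) N
    _ ≤ N * (ε / (2 * T) * (|t| / N)) := by gcongr
    _ = ε / (2 * T) * |t| := by field_simp
    _ ≤ ε / (2 * T) * T := by gcongr
    _ < ε := by field_simp; linarith

lemma isLittleO_of_tendstoUniformlyOn_pow (hp0 : ∀ t, 0 ≤ p t) (hp1 : ∀ t, p t ≤ 1) (hp : p 0 = 1)
    (h : TendstoUniformlyOn (fun (N : ℕ) t => p (t / N) ^ N) (fun _ => 1) atTop (Icc (-2) 2)) :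
    (fun t => 1 - p t) =o[𝓝 0] fun t => t := by
  refine isLittleO_iff.2 fun c hc => ?_
  obtain ⟨N₀, hN₀⟩ := eventually_atTop.1
    (Metric.tendstoUniformlyOn_iff.1 h (min (c / 2) (1 / 2)) (by positivity))
  filter_upwards [Metric.ball_mem_nhds 0 (by positivity : (0 : ℝ) < 1 / (N₀ + 1))] with s hs
  rw [mem_ball_zero_iff, Real.norm_eq_abs, lt_div_iff₀ (by positivity)] at hs
  rcases eq_or_ne s 0 with rfl | hs0
  · simp [hp]
  have hs' : 0 < |s| := abs_pos.2 hs0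
  -- `N ≈ 1 / |s|` puts `s * N` in `[-2, 2]`
  set N := ⌈|s|⁻¹⌉₊
  have hsN : 1 ≤ |s| * N := by
    rw [← div_le_iff₀' hs', one_div]
    exact Nat.le_ceil _
  have hsN' : |s| * N ≤ 2 := by
    have := Nat.ceil_lt_add_one (inv_nonneg.2 hs'.le) (a := |s|⁻¹)
    have h1 : |s| * (|s|⁻¹ + 1) = 1 + |s| := by field_simp
    nlinarith
  have hNN₀ : N₀ ≤ N := by
    have : (N₀ : ℝ) < N := by nlinarith
    exact_mod_cast this.le
  have hclose := hN₀ N hNN₀ (s * N) (abs_le.1 (by rw [abs_mul, Nat.abs_cast]; exact hsN'))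
  rw [mul_div_cancel_right₀ _ (by positivity), Real.dist_eq,
    abs_of_nonneg (sub_nonneg.2 (pow_le_one₀ (hp0 _) (hp1 _)))] at hclose
  have hgeom := mul_pow_mul_one_sub_le_one_sub_pow (hp0 s) (hp1 s) N
  rw [Real.norm_eq_abs, Real.norm_eq_abs, abs_of_nonneg (sub_nonneg.2 (hp1 _))]
  have hpN : 1 / 2 ≤ p s ^ N := by linarith [min_le_right (c / 2) (1 / 2)]
  have hN : N * (1 - p s) ≤ c := by
    nlinarith [min_le_left (c / 2) (1 / 2), hp1 s, Nat.cast_nonneg (α := ℝ) N]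
  calc 1 - p s ≤ |s| * N * (1 - p s) := le_mul_of_one_le_left (sub_nonneg.2 (hp1 s)) hsN
    _ = |s| * (N * (1 - p s)) := by ring
    _ ≤ c * |s| := by rw [mul_comm c]; gcongr

theorem hasDerivAt_zero_iff_tendstoUniformlyOn_pow (hp0 : ∀ t, 0 ≤ p t) (hp1 : ∀ t, p t ≤ 1)
    (hp : p 0 = 1) :
    HasDerivAt p 0 0 ↔ ∀ T > (0 : ℝ),
      TendstoUniformlyOn (fun (N : ℕ) t => p (t / N) ^ N) (fun _ => 1) atTop (Icc (-T) T) := by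
  rw [hasDerivAt_zero_iff_isLittleO_one_sub hp]
  exact ⟨fun h T hT => tendstoUniformlyOn_pow_of_isLittleO hp0 hp1 h hT,
    fun h => isLittleO_of_tendstoUniformlyOn_pow hp0 hp1 hp (h 2 two_pos)⟩

end UniformLimit

theorem stmt_0 (μ : Measure ℝ) [IsProbabilityMeasure μ]
    (A : ℝ → ℂ) (hA : ∀ s : ℝ, A s = ∫ l : ℝ, Complex.exp (-(Complex.I * s * l)) ∂μ)
    (p : ℝ → ℝ) (hp : ∀ s : ℝ, p s = ‖A s‖ ^ 2) :
    [Tendsto (fun Λ : ℝ => Λ * (μ (Set.Ioo (-Λ) Λ)ᶜ).toReal) atTop (𝓝 0),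
     HasDerivAt p 0 0,
     ∀ T > (0 : ℝ), TendstoUniformlyOn (fun (N : ℕ) (t : ℝ) => p (t / N) ^ N)
       (fun _ => 1) atTop (Set.Icc (-T) T)].TFAE := by
  have hpA : p = fun t => ‖charFun μ t‖ ^ 2 := by
    funext t
    have hAt : A t = charFun μ (-t) := by
      rw [hA, charFun_apply_real]
      congr with l
      push_cast
      ring_nf
    rw [hp, hAt, charFun_neg, Complex.norm_conj]
  have htail : ∀ Λ : ℝ, (μ (Ioo (-Λ) Λ)ᶜ).toReal = μ.real {x | Λ ≤ |x|} := by
    intro Λ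
    rw [measureReal_def]
    congr with x
    rw [mem_compl_iff, mem_Ioo, ← abs_lt, mem_ofPred_eq, not_lt]
  subst hpA
  simp_rw [htail]
  tfae_have 1 ↔ 2 := tendsto_mul_measureReal_abs_ge_iff_hasDerivAt μ
  tfae_have 2 ↔ 3 := hasDerivAt_zero_iff_tendstoUniformlyOn_pow (fun _ => by positivity)
    (fun t => pow_le_one₀ (norm_nonneg _) (norm_charFun_le_one t)) (by simp)
  tfae_finish
end

section
/- Let μ be a Borel probability measure on ℝ, A(s) = ∫_ℝ e^{−isλ} dμ(λ) and p(s) = |A(s)|². Then Λ·μ((−Λ,Λ)ᶜ) → 0 as Λ → +∞ if and only if p is differentiable at 0 with p'(0) = 0. -/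
/-!
`p = ‖A‖²` is the characteristic function of the symmetrization `ν = μ ∗ μ.neg`, so it is real
and `1 - p s = ∫ (1 - cos (s x)) dν(x) ≥ 0`. The tail condition passes between `μ` and `ν`:
the `ν`-tail at `Λ` is bounded by `μ`-tails at `Λ / 2`, and bounds the `μ`-tail at `Λ + m` up to
the factor `μ (|x| < m) > 0`.

For `ν`, if `1 - p s = o(s)` then the truncation inequality
`ν (|x| > r) ≤ (r / 2) ‖∫_{-2/r}^{2/r} (1 - p)‖` gives `r ν (|x| > r) → 0`. Conversely `1 - cos (s x) ≤ 2 s² min(|x|, 1/|s|)²`, and by the layer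
cake formula `∫ min(|x|, B)² dν = 2 ∫_0^B t ν(|x| > t) dt = O(1) + o(B)`, so `1 - p s = o(s)`.
-/

open MeasureTheory Filter Topology Asymptotics

namespace MeasureTheory

instance Measure.isProbabilityMeasure_neg {G : Type*} [MeasurableSpace G] [Neg G] [MeasurableNeg G]
    (μ : Measure G) [IsProbabilityMeasure μ] : IsProbabilityMeasure μ.neg :=
  isProbabilityMeasure_map measurable_neg.aemeasurable

section CharFun

variable {E : Type*} [NormedAddCommGroup E] [InnerProductSpace ℝ E] [MeasurableSpace E]
  [BorelSpace E]

lemma charFun_measureNeg (μ : Measure E) (t : E) : charFun μ.neg t = charFun μ (-t) := by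
  rw [charFun_apply, charFun_apply]
  exact (integral_map_equiv (MeasurableEquiv.neg E) _).trans (by simp [inner_neg_left])

lemma charFun_conv_measureNeg [SecondCountableTopology E] (μ : Measure E)
    [IsProbabilityMeasure μ] (t : E) :
    charFun (μ ∗ μ.neg) t = (‖charFun μ t‖ ^ 2 : ℝ) := by
  rw [charFun_conv, charFun_measureNeg, charFun_neg, Complex.mul_conj, Complex.normSq_eq_norm_sq]

end CharFun

section Symmetrization

lemma measureReal_neg_abs_ge (μ : Measure ℝ) (Λ : ℝ) :
    μ.neg.real {x | Λ ≤ |x|} = μ.real {x | Λ ≤ |x|} := by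
  rw [measureReal_def, Measure.neg_apply]
  congr 2
  ext x
  simp

variable {μ ν : Measure ℝ} [IsProbabilityMeasure μ] [IsProbabilityMeasure ν]

lemma measureReal_conv_abs_ge_le (Λ : ℝ) :
    (μ ∗ ν).real {x | Λ ≤ |x|} ≤ μ.real {x | Λ / 2 ≤ |x|} + ν.real {x | Λ / 2 ≤ |x|} := by
  rw [Measure.conv, map_measureReal_apply measurable_add
    (measurableSet_le measurable_const (by fun_prop))]
  calc (μ.prod ν).real ((fun x : ℝ × ℝ => x.1 + x.2) ⁻¹' {x | Λ ≤ |x|})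
      ≤ (μ.prod ν).real ({x | Λ / 2 ≤ |x|} ×ˢ Set.univ ∪ Set.univ ×ˢ {x | Λ / 2 ≤ |x|}) := by
        refine measureReal_mono fun q (hq : Λ ≤ |q.1 + q.2|) => ?_
        rcases le_or_gt (Λ / 2) |q.1| with h1 | h1
        · exact Or.inl ⟨h1, trivial⟩
        · refine Or.inr ⟨trivial, show Λ / 2 ≤ |q.2| from ?_⟩
          linarith [abs_add_le q.1 q.2]
    _ ≤ _ := measureReal_union_le _ _
    _ = _ := by simp [measureReal_prod_prod]

lemma measureReal_abs_ge_add_mul_le_conv (Λ m : ℝ) :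
    μ.real {x | Λ + m ≤ |x|} * ν.real {x | |x| < m} ≤ (μ ∗ ν).real {x | Λ ≤ |x|} := by
  rw [← measureReal_prod_prod, Measure.conv, map_measureReal_apply measurable_add
    (measurableSet_le measurable_const (by fun_prop))]
  refine measureReal_mono (fun q ⟨h1, h2⟩ => ?_)
  simp only [Set.mem_preimage, Set.mem_ofPred_eq] at h1 h2 ⊢
  have := abs_add_le (q.1 + q.2) (-q.2)
  simp only [add_neg_cancel_right, abs_neg] at this
  linarith

lemma tendsto_mul_measureReal_conv
    (hμ : Tendsto (fun Λ => Λ * μ.real {x | Λ ≤ |x|}) atTop (𝓝 0))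
    (hν : Tendsto (fun Λ => Λ * ν.real {x | Λ ≤ |x|}) atTop (𝓝 0)) :
    Tendsto (fun Λ => Λ * (μ ∗ ν).real {x | Λ ≤ |x|}) atTop (𝓝 0) := by
  have half := tendsto_id.atTop_div_const (zero_lt_two' ℝ)
  have hsum := ((hμ.comp half).add (hν.comp half)).const_mul 2
  rw [add_zero, mul_zero] at hsum
  refine squeeze_zero' ?_ ?_ hsum
  · filter_upwards [eventually_ge_atTop 0] with Λ hΛ
    positivity
  · filter_upwards [eventually_ge_atTop 0] with Λ hΛ
    calc Λ * (μ ∗ ν).real {x | Λ ≤ |x|}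
        ≤ Λ * (μ.real {x | Λ / 2 ≤ |x|} + ν.real {x | Λ / 2 ≤ |x|}) := by
          gcongr
          exact measureReal_conv_abs_ge_le Λ
      _ = _ := by simp only [Function.comp_apply, id]; ring

lemma tendsto_mul_measureReal_of_conv
    (h : Tendsto (fun Λ => Λ * (μ ∗ ν).real {x | Λ ≤ |x|}) atTop (𝓝 0)) :
    Tendsto (fun Λ => Λ * μ.real {x | Λ ≤ |x|}) atTop (𝓝 0) := by
  obtain ⟨m, hm⟩ : ∃ m : ℕ, 0 < ν.real {x | |x| < m} := by
    have hcover : (⋃ m : ℕ, {x : ℝ | |x| < m}) = Set.univ :=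
      Set.eq_univ_of_forall fun x => Set.mem_iUnion.2 (exists_nat_gt |x|)
    obtain ⟨m, hm⟩ := exists_measure_pos_of_not_measure_iUnion_null
      (s := fun m : ℕ => {x : ℝ | |x| < m}) (μ := ν) (by simp [hcover])
    exact ⟨m, ENNReal.toReal_pos hm.ne' (measure_ne_top _ _)⟩
  have hshift := (h.comp (tendsto_atTop_add_const_right _ (-(m : ℝ)) tendsto_id)).const_mul
    (2 / ν.real {x | |x| < m})
  rw [mul_zero] at hshift
  refine squeeze_zero' ?_ ?_ hshift
  · filter_upwards [eventually_ge_atTop 0] with Λ hΛ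
    positivity
  · filter_upwards [eventually_ge_atTop (2 * (m : ℝ))] with Λ hΛ
    have hbound := measureReal_abs_ge_add_mul_le_conv (μ := μ) (ν := ν) (Λ - m) m
    rw [sub_add_cancel] at hbound
    simp only [Function.comp_apply, id, ← sub_eq_add_neg]
    rw [div_mul_eq_mul_div, le_div_iff₀ hm]
    have hΛ0 : 0 ≤ Λ := le_trans (by positivity) hΛ
    calc Λ * μ.real {x | Λ ≤ |x|} * ν.real {x | |x| < m}
        ≤ Λ * (μ ∗ ν).real {x | Λ - m ≤ |x|} := by
          rw [mul_assoc]; gcongr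
      _ ≤ 2 * ((Λ - m) * (μ ∗ ν).real {x | Λ - m ≤ |x|}) := by
          rw [← mul_assoc]; gcongr; linarith

lemma tendsto_mul_measureReal_conv_neg_iff :
    Tendsto (fun Λ => Λ * (μ ∗ μ.neg).real {x | Λ ≤ |x|}) atTop (𝓝 0) ↔
      Tendsto (fun Λ => Λ * μ.real {x | Λ ≤ |x|}) atTop (𝓝 0) :=
  ⟨tendsto_mul_measureReal_of_conv, fun h =>
    tendsto_mul_measureReal_conv h (by simpa only [measureReal_neg_abs_ge] using h)⟩

end Symmetrization

section TailsAndCharFun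

lemma one_sub_cos_mul_le (s x : ℝ) : 1 - Real.cos (s * x) ≤ 2 * s ^ 2 * min |x| |s|⁻¹ ^ 2 := by
  rcases le_total |x| |s|⁻¹ with h | h
  · rw [min_eq_left h, sq_abs]
    nlinarith [Real.one_sub_sq_div_two_le_cos (x := s * x), sq_nonneg (s * x)]
  · rcases eq_or_ne s 0 with rfl | hs
    · simp
    rw [min_eq_right h, inv_pow, sq_abs, mul_assoc, mul_inv_cancel₀ (pow_ne_zero 2 hs)]
    linarith [Real.neg_one_le_cos (s * x)]

variable {ν : Measure ℝ} [IsProbabilityMeasure ν]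

lemma one_sub_re_charFun_eq_integral (t : ℝ) :
    1 - (charFun ν t).re = ∫ x, (1 - Real.cos (t * x)) ∂ν := by
  have hexp : Integrable (fun x : ℝ => Complex.exp (t * x * Complex.I)) ν :=
    Integrable.of_bound (by fun_prop) 1 (ae_of_all _ fun x => by
      rw [← Complex.ofReal_mul, Complex.norm_exp_ofReal_mul_I])
  have hre := integral_re hexp
  simp only [RCLike.re_to_complex, ← Complex.ofReal_mul, Complex.exp_ofReal_mul_I_re] at hre
  rw [integral_sub (integrable_const 1) (Integrable.of_bound (by fun_prop) 1
      (ae_of_all _ fun x => Real.abs_cos_le_one _)), charFun_apply_real, hre]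
  simp

lemma tendsto_mul_measureReal_abs_ge_of_isLittleO
    (h : (fun t => 1 - charFun ν t) =o[𝓝 0] id) :
    Tendsto (fun Λ => Λ * ν.real {x | Λ ≤ |x|}) atTop (𝓝 0) := by
  refine tendsto_order.2 ⟨fun a ha => (eventually_ge_atTop 0).mono fun Λ hΛ =>
    ha.trans_le (by positivity), fun a ha => ?_⟩
  obtain ⟨δ, hδ, hsmall⟩ := Metric.eventually_nhds_iff.1 (h.def (show 0 < a / 16 by positivity))
  filter_upwards [eventually_gt_atTop (4 / δ)] with Λ hΛ
  have hΛ0 : 0 < Λ := lt_trans (by positivity) hΛ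
  have hlevy := measureReal_abs_gt_le_integral_charFun (μ := ν) (r := Λ / 2) (by positivity)
  rw [neg_mul, show 2 * (Λ / 2)⁻¹ = 4 / Λ by field_simp; norm_num] at hlevy
  have hbound : ∀ t ∈ Set.uIoc (-(4 / Λ)) (4 / Λ), ‖1 - charFun ν t‖ ≤ a / 16 * (4 / Λ) := by
    intro t ht
    rw [Set.uIoc_of_le (neg_le_self (by positivity))] at ht
    have ht' : |t| ≤ 4 / Λ := abs_le.2 ⟨ht.1.le, ht.2⟩
    have hδt : dist t 0 < δ := by
      rw [dist_zero_right, Real.norm_eq_abs]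
      exact ht'.trans_lt ((div_lt_comm₀ hδ hΛ0).1 hΛ)
    calc ‖1 - charFun ν t‖ ≤ a / 16 * ‖t‖ := hsmall hδt
      _ ≤ a / 16 * (4 / Λ) := by rw [Real.norm_eq_abs]; gcongr
  have hint : ‖∫ t in -(4 / Λ)..(4 / Λ), 1 - charFun ν t‖ ≤ a / 16 * (4 / Λ) * (8 / Λ) := by
    refine (intervalIntegral.norm_integral_le_of_norm_le_const hbound).trans_eq ?_
    rw [sub_neg_eq_add, abs_of_pos (by positivity)]
    ring
  have hmono : ν.real {x | Λ ≤ |x|} ≤ ν.real {x | Λ / 2 < |x|} :=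
    measureReal_mono fun x (hx : Λ ≤ |x|) => show Λ / 2 < |x| by linarith
  calc Λ * ν.real {x | Λ ≤ |x|} ≤ Λ * ν.real {x | Λ / 2 < |x|} := by gcongr
    _ ≤ Λ * (2⁻¹ * (Λ / 2) * (a / 16 * (4 / Λ) * (8 / Λ))) := by
        gcongr
        exact hlevy.trans (by gcongr)
    _ = a / 2 := by
        field_simp
        ring
    _ < a := by linarith

lemma integral_min_abs_sq_le {ε Λ₀ B : ℝ} (hΛ₀ : 0 ≤ Λ₀) (hB : 0 ≤ B)
    (h : ∀ t, Λ₀ ≤ t → t * ν.real {x | t ≤ |x|} ≤ ε) :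
    ∫ x, min |x| B ^ 2 ∂ν ≤ 2 * (Λ₀ ^ 2 + ε * B) := by
  have hε : 0 ≤ ε := (by positivity : 0 ≤ Λ₀ * ν.real {x | Λ₀ ≤ |x|}).trans (h Λ₀ le_rfl)
  have hlayer := lintegral_rpow_eq_lintegral_meas_lt_mul ν (f := fun x => min |x| B)
    (ae_of_all _ fun x => le_min (abs_nonneg x) hB) (by fun_prop) two_pos
  norm_num only [Real.rpow_two, Real.rpow_one] at hlayer
  have hpoint : ∀ t ∈ Set.Ioi (0 : ℝ), ν {x | t < min |x| B} * ENNReal.ofReal t ≤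
      (Set.Ioc 0 Λ₀).indicator (fun _ => ENNReal.ofReal Λ₀) t +
        (Set.Ioc 0 B).indicator (fun _ => ENNReal.ofReal ε) t := by
    intro t (ht : 0 < t)
    rcases le_or_gt t Λ₀ with htΛ | htΛ
    · rw [Set.indicator_of_mem (show t ∈ Set.Ioc 0 Λ₀ from ⟨ht, htΛ⟩)]
      calc ν {x | t < min |x| B} * ENNReal.ofReal t ≤ 1 * ENNReal.ofReal Λ₀ := by
            gcongr
            exact prob_le_one
        _ ≤ _ := by rw [one_mul]; exact le_self_add
    rcases lt_or_ge t B with htB | htB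
    · rw [Set.indicator_of_mem (show t ∈ Set.Ioc 0 B from ⟨ht, htB.le⟩)]
      calc ν {x | t < min |x| B} * ENNReal.ofReal t
          ≤ ν {x | t ≤ |x|} * ENNReal.ofReal t := by
            gcongr with x
            exact fun hx => (hx.trans_le (min_le_left _ _)).le
        _ = ENNReal.ofReal (t * ν.real {x | t ≤ |x|}) := by
            rw [mul_comm, ENNReal.ofReal_mul ht.le, ofReal_measureReal]
        _ ≤ ENNReal.ofReal ε := ENNReal.ofReal_le_ofReal (h t htΛ.le)
        _ ≤ _ := le_add_self
    · have hempty : {x | t < min |x| B} = ∅ :=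
        Set.eq_empty_of_forall_notMem fun x (hx : t < min |x| B) =>
          (hx.trans_le ((min_le_right _ _).trans htB)).false
      rw [hempty, measure_empty, zero_mul]
      exact zero_le
  have hbound : ∫⁻ x, ENNReal.ofReal (min |x| B ^ 2) ∂ν ≤ ENNReal.ofReal (2 * (Λ₀ ^ 2 + ε * B)) :=
    calc ∫⁻ x, ENNReal.ofReal (min |x| B ^ 2) ∂ν
        = ENNReal.ofReal 2 * ∫⁻ t in Set.Ioi 0, ν {x | t < min |x| B} * ENNReal.ofReal t := hlayer
      _ ≤ ENNReal.ofReal 2 * ∫⁻ t, (Set.Ioc 0 Λ₀).indicator (fun _ => ENNReal.ofReal Λ₀) t +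
            (Set.Ioc 0 B).indicator (fun _ => ENNReal.ofReal ε) t := by
          gcongr ENNReal.ofReal 2 * ?_
          refine (setLIntegral_mono ?_ hpoint).trans (setLIntegral_le_lintegral _ _)
          exact (measurable_const.indicator measurableSet_Ioc).add
            (measurable_const.indicator measurableSet_Ioc)
      _ = ENNReal.ofReal (2 * (Λ₀ ^ 2 + ε * B)) := by
          rw [lintegral_add_left (measurable_const.indicator measurableSet_Ioc),
            lintegral_indicator_const measurableSet_Ioc,
            lintegral_indicator_const measurableSet_Ioc,
            Real.volume_Ioc, Real.volume_Ioc, sub_zero, sub_zero, ← ENNReal.ofReal_mul hΛ₀,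
            ← ENNReal.ofReal_mul hε, ← ENNReal.ofReal_add (by positivity) (by positivity),
            ← ENNReal.ofReal_mul zero_le_two, sq]
  rw [integral_eq_lintegral_of_nonneg_ae (ae_of_all _ fun x => by positivity) (by fun_prop)]
  exact ENNReal.toReal_le_of_le_ofReal (by positivity) hbound

lemma isLittleO_one_sub_re_charFun_of_tendsto
    (h : Tendsto (fun Λ => Λ * ν.real {x | Λ ≤ |x|}) atTop (𝓝 0)) :
    (fun t => 1 - (charFun ν t).re) =o[𝓝 0] id := by
  refine IsLittleO.of_bound fun c hc => ?_
  obtain ⟨Λ₁, hΛ₁⟩ :=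
    eventually_atTop.1 (h.eventually (Iic_mem_nhds (show 0 < c / 8 by positivity)))
  set Λ₀ := max Λ₁ (c / 8)
  have hΛ₀ : 0 < Λ₀ := lt_max_of_lt_right (by positivity)
  filter_upwards [Metric.ball_mem_nhds (0 : ℝ) (show 0 < c / 8 / Λ₀ ^ 2 by positivity)] with s hs
  rw [Metric.mem_ball, dist_zero_right, Real.norm_eq_abs, lt_div_iff₀ (by positivity)] at hs
  have hmoment := integral_min_abs_sq_le (ν := ν) (B := |s|⁻¹) hΛ₀.le (by positivity)
    fun t ht => hΛ₁ t ((le_max_left _ _).trans ht)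
  have hcos_int : Integrable (fun x => 2 * s ^ 2 * min |x| |s|⁻¹ ^ 2) ν :=
    Integrable.of_bound (by fun_prop) (2 * s ^ 2 * |s|⁻¹ ^ 2) (ae_of_all _ fun x => by
      rw [Real.norm_of_nonneg (by positivity)]
      gcongr
      exact min_le_right _ _)
  have hnonneg : 0 ≤ 1 - (charFun ν s).re :=
    sub_nonneg.2 ((Complex.re_le_norm _).trans (norm_charFun_le_one s))
  rw [Real.norm_of_nonneg hnonneg, id, Real.norm_eq_abs]
  calc 1 - (charFun ν s).re = ∫ x, (1 - Real.cos (s * x)) ∂ν := one_sub_re_charFun_eq_integral s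
    _ ≤ ∫ x, 2 * s ^ 2 * min |x| |s|⁻¹ ^ 2 ∂ν :=
        integral_mono_of_nonneg (ae_of_all _ fun x => sub_nonneg.2 (Real.cos_le_one _))
          hcos_int (ae_of_all _ fun x => one_sub_cos_mul_le s x)
    _ = 2 * s ^ 2 * ∫ x, min |x| |s|⁻¹ ^ 2 ∂ν := integral_const_mul _ _
    _ ≤ 2 * s ^ 2 * (2 * (Λ₀ ^ 2 + c / 8 * |s|⁻¹)) := by gcongr
    _ = 4 * |s| * (|s| * Λ₀ ^ 2) + c / 2 * |s| := by
        have hs2 : s ^ 2 * |s|⁻¹ = |s| := by rw [← sq_abs, sq, mul_self_mul_inv]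
        linear_combination (c / 2) * hs2 - 4 * Λ₀ ^ 2 * sq_abs s
    _ ≤ 4 * |s| * (c / 8) + c / 2 * |s| := by gcongr
    _ = c * |s| := by ring

theorem tendsto_mul_measureReal_abs_ge_iff_isLittleO {φ : ℝ → ℝ} (hφ : ∀ t, charFun ν t = φ t) :
    Tendsto (fun Λ => Λ * ν.real {x | Λ ≤ |x|}) atTop (𝓝 0) ↔
      (fun t => 1 - φ t) =o[𝓝 0] id := by
  have hnorm : (fun t => ‖1 - charFun ν t‖) = fun t => ‖1 - φ t‖ := by
    ext t
    rw [hφ, ← Complex.ofReal_one, ← Complex.ofReal_sub, Complex.norm_real]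
  refine ⟨fun h => by simpa [hφ] using isLittleO_one_sub_re_charFun_of_tendsto h, fun h => ?_⟩
  apply tendsto_mul_measureReal_abs_ge_of_isLittleO
  rwa [← isLittleO_norm_left, hnorm, isLittleO_norm_left]

end TailsAndCharFun

end MeasureTheory

theorem stmt_1 (μ : Measure ℝ) [IsProbabilityMeasure μ]
    (A : ℝ → ℂ) (hA : ∀ s : ℝ, A s = ∫ l : ℝ, Complex.exp (-(Complex.I * s * l)) ∂μ)
    (p : ℝ → ℝ) (hp : ∀ s : ℝ, p s = ‖A s‖ ^ 2) :
    Tendsto (fun Λ : ℝ => Λ * (μ (Set.Ioo (-Λ) Λ)ᶜ).toReal) atTop (𝓝 0) ↔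
      HasDerivAt p 0 0 := by
  have hAμ (s : ℝ) : A s = charFun μ (-s) := by
    rw [hA, charFun_apply_real]
    congr 1 with x
    push_cast
    ring_nf
  have hν (s : ℝ) : charFun (μ ∗ μ.neg) s = p s := by
    rw [charFun_conv_measureNeg, hp, hAμ, charFun_neg, Complex.norm_conj]
  have hp0 : p 0 = 1 := by
    have h0 := hν 0
    rw [charFun_zero, probReal_univ] at h0
    exact_mod_cast h0.symm
  have htail (Λ : ℝ) : (μ (Set.Ioo (-Λ) Λ)ᶜ).toReal = μ.real {x | Λ ≤ |x|} := by
    rw [← measureReal_def]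
    congr 1 with x
    simp only [Set.mem_compl_iff, Set.mem_Ioo, ← abs_lt, not_lt, Set.mem_ofPred_eq]
  have hderiv : HasDerivAt p 0 0 ↔ (fun t => 1 - p t) =o[𝓝 0] id := by
    rw [hasDerivAt_iff_isLittleO, ← isLittleO_neg_left]
    simp [hp0]
    rfl
  simp_rw [htail, hderiv, ← tendsto_mul_measureReal_abs_ge_iff_isLittleO hν,
    tendsto_mul_measureReal_conv_neg_iff]
end

section
/- Let μ be a Borel probability measure on ℝ. Then the following are equivalent: (1) Λ·μ((−Λ,Λ)ᶜ) → 0 as Λ → +∞; (2) for every integer k ≥ 1, (1/Λ^k)·∫_{(−Λ,Λ)} λ^{k+1} dμ(λ) → 0 as Λ → +∞. -/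
/-!
Write `S(Λ) = ∫_{(-Λ,Λ)} λ² dμ` and `T(Λ) = μ((-Λ,Λ)ᶜ)`. On `(-Λ,Λ)` we have
`|λ|^(k+1) ≤ Λ^(k-1) λ²`, so every condition in (2) follows from the one for `k = 1`, namely
`S(Λ)/Λ → 0`, and it remains to compare this with `Λ T(Λ) → 0`. Both directions are dyadic.
Peeling off the shell `t ≤ |λ| < 2t` gives `S(2t) ≤ S(t) + 4t · tT(t)`, and summing over
`t = 2^j a` yields `S(Λ) ≤ S(a) + O(εΛ)` as soon as `tT(t) ≤ ε` for `t ≥ a`. Conversely, Chebyshev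
on that shell gives `tT(t) ≤ S(2t)/t + (2t)T(2t)/2`; iterating, and using `T(2^n Λ) → 0`,
`ΛT(Λ) ≤ 2 sup_{t ≥ Λ} S(2t)/t`.
-/

open MeasureTheory Filter Topology Set

noncomputable def truncSecondMoment (μ : Measure ℝ) (Λ : ℝ) : ℝ :=
  ∫ l in Ioo (-Λ) Λ, l ^ 2 ∂μ

section

variable {μ : Measure ℝ}

lemma integrableOn_pow_Ioo [IsLocallyFiniteMeasure μ] (n : ℕ) (Λ : ℝ) :
    IntegrableOn (fun l : ℝ => l ^ n) (Ioo (-Λ) Λ) μ :=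
  (continuous_pow n).integrableOn_Icc.mono_set Ioo_subset_Icc_self

lemma truncSecondMoment_nonneg (Λ : ℝ) : 0 ≤ truncSecondMoment μ Λ :=
  setIntegral_nonneg measurableSet_Ioo fun l _ => sq_nonneg l

lemma truncSecondMoment_mono [IsLocallyFiniteMeasure μ] : Monotone (truncSecondMoment μ) :=
  fun _ b hab => setIntegral_mono_set (integrableOn_pow_Ioo 2 b)
    (ae_of_all _ fun l => sq_nonneg l) (Ioo_subset_Ioo (neg_le_neg hab) hab).eventuallyLE

lemma norm_setIntegral_pow_Ioo_le [IsLocallyFiniteMeasure μ] (m : ℕ) (Λ : ℝ) :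
    ‖∫ l in Ioo (-Λ) Λ, l ^ (m + 2) ∂μ‖ ≤ Λ ^ m * truncSecondMoment μ Λ := by
  rw [truncSecondMoment, ← integral_const_mul]
  refine norm_integral_le_of_norm_le ((integrableOn_pow_Ioo 2 Λ).const_mul _) ?_
  filter_upwards [ae_restrict_mem measurableSet_Ioo] with l hl
  rw [norm_pow, pow_add, Real.norm_eq_abs, sq_abs]
  gcongr
  exact abs_le.2 ⟨hl.1.le, hl.2.le⟩

lemma norm_inv_pow_mul_setIntegral_pow_Ioo_le [IsLocallyFiniteMeasure μ] {k : ℕ} (hk : 1 ≤ k)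
    {Λ : ℝ} (hΛ : 0 < Λ) :
    ‖(1 / Λ ^ k) * ∫ l in Ioo (-Λ) Λ, l ^ (k + 1) ∂μ‖ ≤ truncSecondMoment μ Λ / Λ := by
  obtain ⟨m, rfl⟩ := Nat.exists_eq_add_of_le' hk
  rw [norm_mul, norm_div, norm_one, norm_pow, Real.norm_of_nonneg hΛ.le]
  calc 1 / Λ ^ (m + 1) * ‖∫ l in Ioo (-Λ) Λ, l ^ (m + 2) ∂μ‖
      ≤ 1 / Λ ^ (m + 1) * (Λ ^ m * truncSecondMoment μ Λ) := by
        gcongr; exact norm_setIntegral_pow_Ioo_le m Λ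
    _ = truncSecondMoment μ Λ / Λ := by field_simp; ring

lemma truncSecondMoment_le_add [IsFiniteMeasure μ] {a b : ℝ} (hab : a ≤ b) :
    truncSecondMoment μ b ≤ truncSecondMoment μ a + b ^ 2 * μ.real (Ioo (-a) a)ᶜ := by
  have hsub : Ioo (-a) a ⊆ Ioo (-b) b := Ioo_subset_Ioo (neg_le_neg hab) hab
  have hsplit : truncSecondMoment μ b =
      truncSecondMoment μ a + ∫ l in Ioo (-b) b \ Ioo (-a) a, l ^ 2 ∂μ := by
    rw [truncSecondMoment]
    conv_lhs => rw [← union_sdiff_cancel hsub]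
    exact setIntegral_union (μ := μ) disjoint_sdiff_right
      (measurableSet_Ioo.diff measurableSet_Ioo) (integrableOn_pow_Ioo 2 a)
      ((integrableOn_pow_Ioo 2 b).mono_set sdiff_subset)
  have hshell : ∫ l in Ioo (-b) b \ Ioo (-a) a, l ^ 2 ∂μ ≤ b ^ 2 * μ.real (Ioo (-a) a)ᶜ := by
    refine (Real.le_norm_self _).trans ((norm_setIntegral_le_of_norm_le_const (C := b ^ 2)
      (measure_lt_top _ _) fun l hl => ?_).trans ?_)
    · rw [norm_pow, Real.norm_eq_abs]
      exact pow_le_pow_left₀ (abs_nonneg l) (abs_le.2 ⟨hl.1.1.le, hl.1.2.le⟩) 2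
    · exact mul_le_mul_of_nonneg_left (measureReal_mono (sdiff_subset_compl _ _)) (sq_nonneg b)
  linarith

lemma truncSecondMoment_two_pow_mul_le [IsFiniteMeasure μ] {a ε : ℝ} (ha : 0 ≤ a)
    (hε : ∀ t ≥ a, t * μ.real (Ioo (-t) t)ᶜ ≤ ε) (n : ℕ) :
    truncSecondMoment μ (2 ^ n * a) ≤ truncSecondMoment μ a + 4 * ε * a * (2 ^ n - 1) := by
  induction n with
  | zero => simp
  | succ n ih =>
    set t := 2 ^ n * a
    calc truncSecondMoment μ (2 ^ (n + 1) * a)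
        ≤ truncSecondMoment μ t + (2 ^ (n + 1) * a) ^ 2 * μ.real (Ioo (-t) t)ᶜ :=
          truncSecondMoment_le_add
            (mul_le_mul_of_nonneg_right (pow_le_pow_right₀ one_le_two n.le_succ) ha)
      _ = truncSecondMoment μ t + 4 * t * (t * μ.real (Ioo (-t) t)ᶜ) := by ring
      _ ≤ truncSecondMoment μ a + 4 * ε * a * (2 ^ n - 1) + 4 * t * ε := by
          gcongr
          exact hε t (le_mul_of_one_le_left ha (one_le_pow₀ one_le_two))
      _ = truncSecondMoment μ a + 4 * ε * a * (2 ^ (n + 1) - 1) := by ring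

theorem tendsto_truncSecondMoment_div_of_tendsto_mul_measureReal [IsFiniteMeasure μ]
    (h : Tendsto (fun Λ => Λ * μ.real (Ioo (-Λ) Λ)ᶜ) atTop (𝓝 0)) :
    Tendsto (fun Λ => truncSecondMoment μ Λ / Λ) atTop (𝓝 0) := by
  refine Metric.tendsto_nhds.2 fun ε hε => ?_
  obtain ⟨M, hM⟩ := eventually_atTop.1 ((tendsto_order.1 h).2 (ε / 16) (by positivity))
  set a := max M 1
  have ha : 0 < a := lt_max_of_lt_right one_pos
  have hbound : ∀ Λ ≥ a, truncSecondMoment μ Λ ≤ truncSecondMoment μ a + ε / 2 * Λ := by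
    intro Λ hΛ
    obtain ⟨n, hn, hn'⟩ := exists_nat_pow_near ((one_le_div ha).2 hΛ) one_lt_two
    rw [le_div_iff₀ ha] at hn
    rw [div_lt_iff₀ ha] at hn'
    calc truncSecondMoment μ Λ ≤ truncSecondMoment μ (2 ^ (n + 1) * a) :=
          truncSecondMoment_mono hn'.le
      _ ≤ truncSecondMoment μ a + 4 * (ε / 16) * a * (2 ^ (n + 1) - 1) :=
          truncSecondMoment_two_pow_mul_le ha.le
            (fun t ht => (hM t ((le_max_left _ _).trans ht)).le) _
      _ ≤ truncSecondMoment μ a + ε / 2 * Λ := by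
          rw [pow_succ]; nlinarith
  have hsmall : Tendsto (fun Λ => truncSecondMoment μ a / Λ) atTop (𝓝 0) :=
    tendsto_const_nhds.div_atTop tendsto_id
  filter_upwards [eventually_ge_atTop a, (tendsto_order.1 hsmall).2 (ε / 2) (by positivity)]
    with Λ hΛ hΛsmall
  have hΛpos : 0 < Λ := ha.trans_le hΛ
  rw [Real.dist_0_eq_abs, abs_of_nonneg (div_nonneg (truncSecondMoment_nonneg Λ) hΛpos.le)]
  calc truncSecondMoment μ Λ / Λ ≤ (truncSecondMoment μ a + ε / 2 * Λ) / Λ := by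
        gcongr; exact hbound Λ hΛ
    _ = truncSecondMoment μ a / Λ + ε / 2 := by field_simp
    _ < ε := by linarith

lemma sq_mul_measureReal_le_truncSecondMoment [IsLocallyFiniteMeasure μ] {t : ℝ} (ht : 0 ≤ t)
    (b : ℝ) : t ^ 2 * μ.real ((Ioo (-t) t)ᶜ ∩ Ioo (-b) b) ≤ truncSecondMoment μ b := by
  have hfin : μ ((Ioo (-t) t)ᶜ ∩ Ioo (-b) b) ≠ ⊤ :=
    ((measure_mono inter_subset_right).trans_lt measure_Ioo_lt_top).ne
  calc t ^ 2 * μ.real ((Ioo (-t) t)ᶜ ∩ Ioo (-b) b)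
      ≤ ∫ l in (Ioo (-t) t)ᶜ ∩ Ioo (-b) b, l ^ 2 ∂μ := by
        refine setIntegral_ge_of_const_le_real (measurableSet_Ioo.compl.inter measurableSet_Ioo)
          hfin (fun l hl => ?_) ((integrableOn_pow_Ioo 2 b).mono_set inter_subset_right)
        have htl : t ≤ |l| := by
          by_contra! hlt
          exact hl.1 ⟨(neg_lt_neg hlt).trans_le (neg_abs_le l), (le_abs_self l).trans_lt hlt⟩
        rw [← sq_abs l]
        exact pow_le_pow_left₀ ht htl 2
    _ ≤ truncSecondMoment μ b :=
        setIntegral_mono_set (integrableOn_pow_Ioo 2 b) (ae_of_all _ fun l => sq_nonneg l)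
          inter_subset_right.eventuallyLE

lemma mul_measureReal_compl_Ioo_le [IsFiniteMeasure μ] {t : ℝ} (ht : 0 < t) :
    t * μ.real (Ioo (-t) t)ᶜ ≤
      truncSecondMoment μ (2 * t) / t + (2 * t) * μ.real (Ioo (-(2 * t)) (2 * t))ᶜ / 2 := by
  have hsplit : μ.real (Ioo (-t) t)ᶜ ≤
      μ.real ((Ioo (-t) t)ᶜ ∩ Ioo (-(2 * t)) (2 * t)) + μ.real (Ioo (-(2 * t)) (2 * t))ᶜ := by
    rw [← measureReal_inter_add_sdiff (measurableSet_Ioo (a := -(2 * t)) (b := 2 * t))]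
    exact add_le_add le_rfl (measureReal_mono (sdiff_subset_compl _ _))
  have hcheb : t * μ.real ((Ioo (-t) t)ᶜ ∩ Ioo (-(2 * t)) (2 * t)) ≤
      truncSecondMoment μ (2 * t) / t := by
    rw [le_div_iff₀ ht]
    linarith [sq_mul_measureReal_le_truncSecondMoment (μ := μ) ht.le (2 * t)]
  nlinarith

lemma tendsto_measureReal_compl_Ioo_atTop [IsFiniteMeasure μ] :
    Tendsto (fun Λ => μ.real (Ioo (-Λ) Λ)ᶜ) atTop (𝓝 0) := by
  have hanti : Antitone fun Λ : ℝ => (Ioo (-Λ) Λ)ᶜ :=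
    fun _ _ hab => compl_subset_compl.2 (Ioo_subset_Ioo (neg_le_neg hab) hab)
  have hempty : ⋂ Λ : ℝ, (Ioo (-Λ) Λ)ᶜ = ∅ :=
    eq_empty_of_forall_notMem fun l hl => mem_iInter.1 hl (|l| + 1)
      ⟨by linarith [neg_abs_le l], by linarith [le_abs_self l]⟩
  have h := tendsto_measure_iInter_atTop (μ := μ)
    (fun _ => measurableSet_Ioo.compl.nullMeasurableSet) hanti ⟨0, measure_ne_top _ _⟩
  rw [hempty, measure_empty] at h
  exact (ENNReal.tendsto_toReal ENNReal.zero_ne_top).comp h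

lemma mul_measureReal_compl_Ioo_le_of_forall [IsFiniteMeasure μ] {Λ δ : ℝ} (hΛ : 0 < Λ)
    (hδ : ∀ t ≥ Λ, truncSecondMoment μ (2 * t) / t ≤ δ) (n : ℕ) :
    Λ * μ.real (Ioo (-Λ) Λ)ᶜ ≤
      2 * δ * (1 - (1 / 2) ^ n) + Λ * μ.real (Ioo (-(2 ^ n * Λ)) (2 ^ n * Λ))ᶜ := by
  induction n generalizing Λ with
  | zero => simp
  | succ n ih =>
    have hnext := ih (by positivity : 0 < 2 * Λ) fun t ht => hδ t (by linarith)
    rw [show (2 : ℝ) ^ n * (2 * Λ) = 2 ^ (n + 1) * Λ by ring] at hnext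
    rw [pow_succ]
    linarith [mul_measureReal_compl_Ioo_le (μ := μ) hΛ, hδ Λ le_rfl]

lemma mul_measureReal_compl_Ioo_le_two_mul [IsFiniteMeasure μ] {Λ δ : ℝ} (hΛ : 0 < Λ)
    (hδ : ∀ t ≥ Λ, truncSecondMoment μ (2 * t) / t ≤ δ) :
    Λ * μ.real (Ioo (-Λ) Λ)ᶜ ≤ 2 * δ := by
  have hpow : Tendsto (fun n : ℕ => (2 : ℝ) ^ n * Λ) atTop atTop :=
    (tendsto_pow_atTop_atTop_of_one_lt one_lt_two).atTop_mul_const hΛ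
  have hlim : Tendsto
      (fun n : ℕ => 2 * δ * (1 - (1 / 2) ^ n) + Λ * μ.real (Ioo (-(2 ^ n * Λ)) (2 ^ n * Λ))ᶜ)
      atTop (𝓝 (2 * δ * (1 - 0) + Λ * 0)) :=
    (((tendsto_pow_atTop_nhds_zero_of_lt_one (by norm_num) (by norm_num)).const_sub 1).const_mul
      _).add ((tendsto_measureReal_compl_Ioo_atTop.comp hpow).const_mul Λ)
  simpa using ge_of_tendsto hlim
    (Eventually.of_forall (mul_measureReal_compl_Ioo_le_of_forall hΛ hδ))

theorem tendsto_mul_measureReal_compl_Ioo_of_tendsto [IsFiniteMeasure μ]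
    (h : Tendsto (fun Λ => truncSecondMoment μ Λ / Λ) atTop (𝓝 0)) :
    Tendsto (fun Λ => Λ * μ.real (Ioo (-Λ) Λ)ᶜ) atTop (𝓝 0) := by
  refine Metric.tendsto_nhds.2 fun ε hε => ?_
  obtain ⟨M, hM⟩ := eventually_atTop.1 ((tendsto_order.1 h).2 (ε / 8) (by positivity))
  filter_upwards [eventually_ge_atTop (max M 1)] with Λ hΛ
  have hΛpos : 0 < Λ := one_pos.trans_le ((le_max_right _ _).trans hΛ)
  have hδ : ∀ t ≥ Λ, truncSecondMoment μ (2 * t) / t ≤ ε / 4 := by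
    intro t ht
    have ht0 : 0 < t := hΛpos.trans_le ht
    have hsmall := hM (2 * t) (by linarith [le_max_left M 1])
    calc truncSecondMoment μ (2 * t) / t = 2 * (truncSecondMoment μ (2 * t) / (2 * t)) := by
          field_simp
      _ ≤ ε / 4 := by linarith
  rw [Real.dist_0_eq_abs, abs_of_nonneg (by positivity)]
  linarith [mul_measureReal_compl_Ioo_le_two_mul hΛpos hδ]

end

theorem stmt_3 (μ : Measure ℝ) [IsProbabilityMeasure μ] :
    Tendsto (fun Λ : ℝ => Λ * (μ (Set.Ioo (-Λ) Λ)ᶜ).toReal) atTop (𝓝 0) ↔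
      ∀ k : ℕ, 1 ≤ k →
        Tendsto (fun Λ : ℝ => (1 / Λ ^ k) * ∫ l in Set.Ioo (-Λ) Λ, l ^ (k + 1) ∂μ)
          atTop (𝓝 0) := by
  constructor
  · intro h k hk
    refine squeeze_zero_norm' ?_ (tendsto_truncSecondMoment_div_of_tendsto_mul_measureReal h)
    filter_upwards [eventually_gt_atTop 0] with Λ hΛ
    exact norm_inv_pow_mul_setIntegral_pow_Ioo_le hk hΛ
  · intro h
    refine tendsto_mul_measureReal_compl_Ioo_of_tendsto ?_
    simpa [truncSecondMoment, div_eq_inv_mul] using h 1 le_rfl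
end

section
/- Let μ be a Borel probability measure on ℝ such that Λ·μ((−Λ,Λ)ᶜ) → 0 as Λ → +∞. Then for every integer k ≥ 1, (1/Λ^k)·∫_{(−Λ,Λ)} λ^{k+1} dμ(λ) → 0 as Λ → +∞. -/
open MeasureTheory Filter Topology Set

/-!
By the layer-cake formula, `∫_{(-Λ,Λ)} |x|^(n+1) dμ ≤ (n+1) ∫₀^Λ μ((-t,t)ᶜ) tⁿ dt`. Since
`|x|^(k+1) ≤ Λ^(k-1) x²` on `(-Λ,Λ)`, the quantity in question is bounded by
`(2/Λ) ∫₀^Λ t μ((-t,t)ᶜ) dt`, the Cesàro mean of a function that tends to `0` by hypothesis.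
-/

theorem tendsto_inv_mul_intervalIntegral_of_tendsto_zero {g : ℝ → ℝ}
    (hint : ∀ Λ, IntervalIntegrable g volume 0 Λ) (hg : Tendsto g atTop (𝓝 0)) :
    Tendsto (fun Λ => Λ⁻¹ * ∫ t in 0..Λ, g t) atTop (𝓝 0) := by
  rw [Metric.tendsto_atTop]
  intro ε hε
  obtain ⟨M, hM⟩ := Metric.tendsto_atTop.1 hg (ε / 2) (half_pos hε)
  have hhead : Tendsto (fun Λ : ℝ => Λ⁻¹ * ∫ t in 0..max M 0, g t) atTop (𝓝 0) := by
    simpa using tendsto_inv_atTop_zero.mul_const (∫ t in 0..max M 0, g t)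
  obtain ⟨N, hN⟩ := Metric.tendsto_atTop.1 hhead (ε / 2) (half_pos hε)
  refine ⟨max N (max M 0 + 1), fun Λ hΛ => ?_⟩
  have hMΛ : max M 0 < Λ := by linarith [le_max_right N (max M 0 + 1)]
  have hΛ0 : 0 < Λ := lt_of_le_of_lt (le_max_right M 0) hMΛ
  have htail : ‖∫ t in max M 0..Λ, g t‖ ≤ ε / 2 * Λ := by
    calc ‖∫ t in max M 0..Λ, g t‖ ≤ ε / 2 * |Λ - max M 0| :=
          intervalIntegral.norm_integral_le_of_norm_le_const fun t ht => by
            rw [uIoc_of_le hMΛ.le] at ht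
            simpa using (hM t (le_max_left M 0 |>.trans ht.1.le)).le
      _ ≤ ε / 2 * Λ := by
          rw [abs_of_pos (sub_pos.2 hMΛ)]
          gcongr
          linarith [le_max_right M 0]
  rw [← intervalIntegral.integral_add_adjacent_intervals (hint _)
    ((hint _).symm.trans (hint Λ)), mul_add, dist_zero_right]
  have := hN Λ (le_max_left _ _ |>.trans hΛ)
  rw [dist_zero_right] at this
  calc _ ≤ ‖Λ⁻¹ * ∫ t in 0..max M 0, g t‖ + ‖Λ⁻¹ * ∫ t in max M 0..Λ, g t‖ := norm_add_le _ _
    _ < ε / 2 + ε / 2 := add_lt_add_of_lt_of_le this <| by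
        rw [norm_mul, norm_inv, Real.norm_of_nonneg hΛ0.le, inv_mul_le_iff₀ hΛ0]
        linarith
    _ = ε := add_halves ε

theorem compl_Ioo_neg_eq_setOf_le_abs (t : ℝ) : (Ioo (-t) t)ᶜ = {x | t ≤ |x|} := by
  ext x
  simp [le_abs', or_comm, imp_iff_not_or]

theorem setLIntegral_Ioo_abs_pow_le (μ : Measure ℝ) (n : ℕ) (Λ : ℝ) :
    ∫⁻ x in Ioo (-Λ) Λ, ENNReal.ofReal (|x| ^ (n + 1)) ∂μ ≤
      (n + 1) * ∫⁻ t in Ioc 0 Λ, μ (Ioo (-t) t)ᶜ * ENNReal.ofReal (t ^ n) := by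
  have hlayer := lintegral_rpow_eq_lintegral_meas_le_mul (μ.restrict (Ioo (-Λ) Λ))
    (ae_of_all _ abs_nonneg) measurable_abs.aemeasurable (p := n + 1) (by positivity)
  simp only [add_sub_cancel_right] at hlayer
  norm_cast at hlayer
  rw [hlayer, Nat.cast_add_one, ← lintegral_indicator measurableSet_Ioc]
  gcongr _ * ?_
  refine (setLIntegral_mono' measurableSet_Ioi fun t (ht : 0 < t) => ?_).trans
    (setLIntegral_le_lintegral _ _)
  rw [← compl_Ioo_neg_eq_setOf_le_abs, Measure.restrict_apply' measurableSet_Ioo]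
  by_cases htΛ : t ≤ Λ
  · rw [indicator_of_mem (show t ∈ Ioc 0 Λ from ⟨ht, htΛ⟩)]
    gcongr
    exact inter_subset_left
  · have hempty : (Ioo (-t) t)ᶜ ∩ Ioo (-Λ) Λ = ∅ :=
      (disjoint_compl_left_iff_subset.2 (Ioo_subset_Ioo (by linarith) (by linarith))).inter_eq
    simp [hempty]

theorem antitone_measureReal_compl_Ioo (μ : Measure ℝ) [IsFiniteMeasure μ] :
    Antitone fun t => μ.real (Ioo (-t) t)ᶜ := fun s t hst =>
  measureReal_mono (compl_subset_compl.2 (Ioo_subset_Ioo (neg_le_neg hst) hst))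

theorem intervalIntegrable_measureReal_compl_Ioo_mul_pow (μ : Measure ℝ) [IsFiniteMeasure μ]
    (n : ℕ) (a b : ℝ) :
    IntervalIntegrable (fun t => μ.real (Ioo (-t) t)ᶜ * t ^ n) volume a b := by
  simpa only [mul_comm] using (antitone_measureReal_compl_Ioo μ).intervalIntegrable.continuousOn_mul
    (continuous_pow n).continuousOn

theorem setIntegral_Ioo_abs_pow_le (μ : Measure ℝ) [IsFiniteMeasure μ] (n : ℕ) {Λ : ℝ}
    (hΛ : 0 ≤ Λ) :
    ∫ x in Ioo (-Λ) Λ, |x| ^ (n + 1) ∂μ ≤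
      (n + 1) * ∫ t in 0..Λ, μ.real (Ioo (-t) t)ᶜ * t ^ n := by
  have htail : ∫⁻ t in Ioc 0 Λ, μ (Ioo (-t) t)ᶜ * ENNReal.ofReal (t ^ n) =
      ENNReal.ofReal (∫ t in 0..Λ, μ.real (Ioo (-t) t)ᶜ * t ^ n) := by
    rw [intervalIntegral.integral_of_le hΛ, ofReal_integral_eq_lintegral_ofReal
      ((intervalIntegrable_iff_integrableOn_Ioc_of_le hΛ).1
        (intervalIntegrable_measureReal_compl_Ioo_mul_pow μ n 0 Λ))
      ((ae_restrict_iff' measurableSet_Ioc).2 (ae_of_all _ fun t ht => by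
        have := ht.1.le; positivity))]
    refine setLIntegral_congr_fun measurableSet_Ioc fun t _ => ?_
    rw [ENNReal.ofReal_mul measureReal_nonneg, ofReal_measureReal]
  calc ∫ x in Ioo (-Λ) Λ, |x| ^ (n + 1) ∂μ
      = (∫⁻ x in Ioo (-Λ) Λ, ENNReal.ofReal (|x| ^ (n + 1)) ∂μ).toReal :=
        integral_eq_lintegral_of_nonneg_ae (ae_of_all _ fun x => by positivity)
          (by fun_prop)
    _ ≤ ((n + 1) * ∫⁻ t in Ioc 0 Λ, μ (Ioo (-t) t)ᶜ * ENNReal.ofReal (t ^ n)).toReal := by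
        refine ENNReal.toReal_mono ?_ (setLIntegral_Ioo_abs_pow_le μ n Λ)
        rw [htail]
        finiteness
    _ = (n + 1) * ∫ t in 0..Λ, μ.real (Ioo (-t) t)ᶜ * t ^ n := by
        rw [htail, ENNReal.toReal_mul, ENNReal.toReal_ofReal]
        · norm_cast
        · exact intervalIntegral.integral_nonneg hΛ fun t ht => by have := ht.1; positivity

theorem setIntegral_Ioo_abs_pow_add_le (μ : Measure ℝ) [IsFiniteMeasure μ] (n m : ℕ) (Λ : ℝ) :
    ∫ x in Ioo (-Λ) Λ, |x| ^ (n + m) ∂μ ≤ Λ ^ m * ∫ x in Ioo (-Λ) Λ, |x| ^ n ∂μ := by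
  rw [← integral_const_mul]
  refine setIntegral_mono_on ?_ ?_ measurableSet_Ioo fun x hx => ?_
  · exact (continuous_abs.pow _).integrableOn_Icc.mono_set Ioo_subset_Icc_self
  · exact ((continuous_abs.pow _).const_mul _).integrableOn_Icc.mono_set Ioo_subset_Icc_self
  · rw [pow_add, mul_comm]
    gcongr
    exact (abs_lt.2 hx).le

theorem stmt_4 (μ : Measure ℝ) [IsProbabilityMeasure μ]
    (h : Tendsto (fun Λ : ℝ => Λ * (μ (Set.Ioo (-Λ) Λ)ᶜ).toReal) atTop (𝓝 0)) :
    ∀ k : ℕ, 1 ≤ k →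
      Tendsto (fun Λ : ℝ => (1 / Λ ^ k) * ∫ l in Set.Ioo (-Λ) Λ, l ^ (k + 1) ∂μ)
        atTop (𝓝 0) := by
  intro k hk
  obtain ⟨m, rfl⟩ := Nat.exists_eq_add_of_le' hk
  have hg : Tendsto (fun t => μ.real (Ioo (-t) t)ᶜ * t ^ 1) atTop (𝓝 0) :=
    h.congr fun t => by rw [measureReal_def, pow_one, mul_comm]
  have hmean := (tendsto_inv_mul_intervalIntegral_of_tendsto_zero
    (intervalIntegrable_measureReal_compl_Ioo_mul_pow μ 1 0) hg).const_mul 2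
  rw [mul_zero] at hmean
  refine squeeze_zero_norm' ?_ hmean
  filter_upwards [eventually_gt_atTop 0] with Λ hΛ
  calc ‖1 / Λ ^ (m + 1) * ∫ x in Ioo (-Λ) Λ, x ^ (m + 1 + 1) ∂μ‖
      ≤ (Λ ^ (m + 1))⁻¹ * ∫ x in Ioo (-Λ) Λ, |x| ^ (2 + m) ∂μ := by
        rw [norm_mul, norm_div, norm_one, norm_pow, Real.norm_of_nonneg hΛ.le, one_div]
        gcongr
        refine (norm_integral_le_integral_norm _).trans_eq ?_
        simp only [norm_pow, Real.norm_eq_abs]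
        ring_nf
    _ ≤ (Λ ^ (m + 1))⁻¹ * (Λ ^ m * ∫ x in Ioo (-Λ) Λ, |x| ^ 2 ∂μ) := by
        gcongr
        exact setIntegral_Ioo_abs_pow_add_le μ 2 m Λ
    _ ≤ (Λ ^ (m + 1))⁻¹ * (Λ ^ m * (2 * ∫ t in 0..Λ, μ.real (Ioo (-t) t)ᶜ * t ^ 1)) := by
        gcongr
        simpa [one_add_one_eq_two] using setIntegral_Ioo_abs_pow_le μ 1 hΛ.le
    _ = 2 * (Λ⁻¹ * ∫ t in 0..Λ, μ.real (Ioo (-t) t)ᶜ * t ^ 1) := by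
        field_simp
        ring
end

section
/- Let μ be a Borel probability measure on ℝ such that (1/Λ)·∫_{(−Λ,Λ)} λ² dμ(λ) → 0 as Λ → +∞. Then Λ·μ((−Λ,Λ)ᶜ) → 0 as Λ → +∞. (Indeed, if (1/Λ)·∫_{(−Λ,Λ)} λ² dμ(λ) < ε for all Λ > Λ₀, then Λ·μ((−Λ,Λ)ᶜ) ≤ 2ε for all Λ > Λ₀.) -/
/-!
For `Λ ≤ |l|` one has `1 = ∫_{|l|}^∞ 2 l² / s³ ds ≤ ∫_Λ^∞ 1_{|l| < s} 2 l² / s³ ds`.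
Integrating over `(-Λ, Λ)ᶜ` against `μ` and exchanging the integrals (Tonelli) gives
`μ((-Λ, Λ)ᶜ) ≤ ∫_Λ^∞ (2 / s³) ∫_{(-s, s)} l² dμ ds ≤ ∫_Λ^∞ 2 ε / s² ds = 2 ε / Λ`
as soon as `∫_{(-s, s)} l² dμ ≤ ε s` for all `s > Λ`.
-/

open MeasureTheory Filter Topology Set
open scoped ENNReal

theorem lintegral_Ioi_rpow_of_lt {a b : ℝ} (ha : a < -1) (hb : 0 < b) :
    ∫⁻ s in Ioi b, ENNReal.ofReal (s ^ a) = ENNReal.ofReal (-b ^ (a + 1) / (a + 1)) := by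
  rw [← ofReal_integral_eq_lintegral_ofReal (integrableOn_Ioi_rpow_of_lt ha hb),
    integral_Ioi_rpow_of_lt ha hb]
  filter_upwards [ae_restrict_mem measurableSet_Ioi] with s hs
  exact Real.rpow_nonneg (hb.trans hs).le a

noncomputable def tailKernel (l s : ℝ) : ℝ≥0∞ :=
  (Ioo (-s) s).indicator (fun l => ENNReal.ofReal (l ^ 2)) l * (2 * ENNReal.ofReal (s ^ (-3 : ℝ)))

theorem measurable_tailKernel : Measurable (Function.uncurry tailKernel) := by
  have hset : MeasurableSet {p : ℝ × ℝ | p.1 ∈ Ioo (-p.2) p.2} :=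
    (measurableSet_lt measurable_snd.neg measurable_fst).inter
      (measurableSet_lt measurable_fst measurable_snd)
  exact (Measurable.indicator (f := fun p : ℝ × ℝ => ENNReal.ofReal (p.1 ^ 2)) (by fun_prop)
    hset).mul (by fun_prop)

theorem lintegral_tailKernel (μ : Measure ℝ) (s : ℝ) :
    ∫⁻ l, tailKernel l s ∂μ
      = (∫⁻ l in Ioo (-s) s, ENNReal.ofReal (l ^ 2) ∂μ) * (2 * ENNReal.ofReal (s ^ (-3 : ℝ))) := by
  simp only [tailKernel]
  rw [lintegral_mul_const _ ((by fun_prop : Measurable fun l : ℝ =>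
    ENNReal.ofReal (l ^ 2)).indicator measurableSet_Ioo), lintegral_indicator measurableSet_Ioo]

theorem setLIntegral_Ioi_abs_tailKernel {l : ℝ} (hl : l ≠ 0) :
    ∫⁻ s in Ioi |l|, tailKernel l s = 1 := by
  have hl' : 0 < |l| := abs_pos.2 hl
  have hkernel : ∀ s ∈ Ioi |l|, tailKernel l s
      = ENNReal.ofReal (l ^ 2) * (2 * ENNReal.ofReal (s ^ (-3 : ℝ))) := fun s hs => by
    rw [tailKernel, indicator_of_mem (show l ∈ Ioo (-s) s from abs_lt.1 hs)]
  rw [setLIntegral_congr_fun measurableSet_Ioi hkernel, lintegral_const_mul _ (by fun_prop),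
    lintegral_const_mul _ (by fun_prop), lintegral_Ioi_rpow_of_lt (by norm_num) hl']
  rw [← ENNReal.ofReal_ofNat 2, ← ENNReal.ofReal_mul (by norm_num),
    ← ENNReal.ofReal_mul (sq_nonneg l), ← ENNReal.ofReal_one]
  congr 1
  rw [show (-3 : ℝ) + 1 = -2 by norm_num, Real.rpow_neg hl'.le, Real.rpow_two, sq_abs]
  field_simp

theorem measure_compl_Ioo_le_lintegral_tailKernel (μ : Measure ℝ) [SFinite μ] {Λ : ℝ}
    (hΛ : 0 < Λ) :
    μ (Ioo (-Λ) Λ)ᶜ ≤ ∫⁻ s in Ioi Λ, ∫⁻ l, tailKernel l s ∂μ := by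
  have hone : ∀ l ∈ (Ioo (-Λ) Λ)ᶜ, 1 ≤ ∫⁻ s in Ioi Λ, tailKernel l s := fun l hl => by
    have hΛl : Λ ≤ |l| := not_lt.1 fun h => hl (abs_lt.1 h)
    calc 1 = ∫⁻ s in Ioi |l|, tailKernel l s :=
          (setLIntegral_Ioi_abs_tailKernel (abs_pos.1 (hΛ.trans_le hΛl))).symm
      _ ≤ ∫⁻ s in Ioi Λ, tailKernel l s := lintegral_mono_set (Ioi_subset_Ioi hΛl)
  calc μ (Ioo (-Λ) Λ)ᶜ = ∫⁻ _ in (Ioo (-Λ) Λ)ᶜ, 1 ∂μ := (setLIntegral_one _).symm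
    _ ≤ ∫⁻ l in (Ioo (-Λ) Λ)ᶜ, (∫⁻ s in Ioi Λ, tailKernel l s) ∂μ :=
        setLIntegral_mono (measurable_tailKernel.lintegral_prod_right) hone
    _ ≤ ∫⁻ l, (∫⁻ s in Ioi Λ, tailKernel l s) ∂μ := setLIntegral_le_lintegral _ _
    _ = ∫⁻ s in Ioi Λ, ∫⁻ l, tailKernel l s ∂μ :=
        lintegral_lintegral_swap measurable_tailKernel.aemeasurable

theorem ofReal_mul_measure_compl_Ioo_le {μ : Measure ℝ} [SFinite μ] {ε Λ : ℝ} (hΛ : 0 < Λ)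
    (H : ∀ s > Λ, ∫⁻ l in Ioo (-s) s, ENNReal.ofReal (l ^ 2) ∂μ ≤ ENNReal.ofReal (ε * s)) :
    ENNReal.ofReal Λ * μ (Ioo (-Λ) Λ)ᶜ ≤ 2 * ENNReal.ofReal ε := by
  have hslice : ∀ s ∈ Ioi Λ,
      ∫⁻ l, tailKernel l s ∂μ ≤ 2 * ENNReal.ofReal ε * ENNReal.ofReal (s ^ (-2 : ℝ)) := by
    intro s hs
    have hs0 : 0 < s := hΛ.trans hs
    have hpow : s * s ^ (-3 : ℝ) = s ^ (-2 : ℝ) := by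
      rw [show (-2 : ℝ) = 1 + -3 by norm_num, Real.rpow_add hs0, Real.rpow_one]
    calc ∫⁻ l, tailKernel l s ∂μ
        ≤ ENNReal.ofReal (ε * s) * (2 * ENNReal.ofReal (s ^ (-3 : ℝ))) := by
          rw [lintegral_tailKernel]; gcongr; exact H s hs
      _ = 2 * ENNReal.ofReal ε * ENNReal.ofReal (s ^ (-2 : ℝ)) := by
          rw [← hpow, ENNReal.ofReal_mul' hs0.le, ENNReal.ofReal_mul hs0.le]; ring
  calc ENNReal.ofReal Λ * μ (Ioo (-Λ) Λ)ᶜ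
      ≤ ENNReal.ofReal Λ *
          ∫⁻ s in Ioi Λ, 2 * ENNReal.ofReal ε * ENNReal.ofReal (s ^ (-2 : ℝ)) := by
        gcongr
        exact (measure_compl_Ioo_le_lintegral_tailKernel μ hΛ).trans
          (setLIntegral_mono (by fun_prop) hslice)
    _ = 2 * ENNReal.ofReal ε * ENNReal.ofReal (Λ * Λ⁻¹) := by
        rw [lintegral_const_mul _ (by fun_prop), lintegral_Ioi_rpow_of_lt (by norm_num) hΛ,
          ENNReal.ofReal_mul hΛ.le]
        norm_num [Real.rpow_neg_one]
        ring
    _ = 2 * ENNReal.ofReal ε := by rw [mul_inv_cancel₀ hΛ.ne', ENNReal.ofReal_one, mul_one]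

theorem setLIntegral_ofReal_sq_Ioo_le {μ : Measure ℝ} [IsLocallyFiniteMeasure μ] {s c : ℝ}
    (h : ∫ l in Ioo (-s) s, l ^ 2 ∂μ ≤ c) :
    ∫⁻ l in Ioo (-s) s, ENNReal.ofReal (l ^ 2) ∂μ ≤ ENNReal.ofReal c := by
  rw [← ofReal_integral_eq_lintegral_ofReal
    ((continuous_pow 2).integrableOn_Icc.mono_set Ioo_subset_Icc_self)
    (ae_of_all _ fun l => sq_nonneg l)]
  exact ENNReal.ofReal_le_ofReal h

theorem mul_toReal_measure_compl_Ioo_le {μ : Measure ℝ} [IsLocallyFiniteMeasure μ] {ε Λ : ℝ}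
    (hΛ : 0 < Λ) (hε : 0 ≤ ε) (H : ∀ s > Λ, (1 / s) * ∫ l in Ioo (-s) s, l ^ 2 ∂μ ≤ ε) :
    Λ * (μ (Ioo (-Λ) Λ)ᶜ).toReal ≤ 2 * ε := by
  have hmoment : ∀ s > Λ, ∫ l in Ioo (-s) s, l ^ 2 ∂μ ≤ ε * s := fun s hs => by
    rw [mul_comm, ← inv_mul_le_iff₀ (hΛ.trans hs), ← one_div]
    exact H s hs
  have hbound := ofReal_mul_measure_compl_Ioo_le hΛ fun s hs =>
    setLIntegral_ofReal_sq_Ioo_le (hmoment s hs)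
  rw [← ENNReal.ofReal_ofNat 2, ← ENNReal.ofReal_mul zero_le_two] at hbound
  simpa [ENNReal.toReal_mul, ENNReal.toReal_ofReal hΛ.le] using
    ENNReal.toReal_le_of_le_ofReal (by positivity) hbound

theorem tendsto_mul_toReal_measure_compl_Ioo {μ : Measure ℝ} [IsLocallyFiniteMeasure μ]
    (h : Tendsto (fun Λ : ℝ => (1 / Λ) * ∫ l in Ioo (-Λ) Λ, l ^ 2 ∂μ) atTop (𝓝 0)) :
    Tendsto (fun Λ : ℝ => Λ * (μ (Ioo (-Λ) Λ)ᶜ).toReal) atTop (𝓝 0) := by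
  refine tendsto_order.2 ⟨fun a ha => ?_, fun a ha => ?_⟩
  · filter_upwards [eventually_ge_atTop 0] with Λ hΛ
    exact ha.trans_le (by positivity)
  · obtain ⟨N, hN⟩ := eventually_atTop.1 (h.eventually (gt_mem_nhds (by positivity : 0 < a / 4)))
    filter_upwards [eventually_gt_atTop (max N 0)] with Λ hΛ
    have hΛN : N < Λ := (le_max_left N 0).trans_lt hΛ
    have hbound := mul_toReal_measure_compl_Ioo_le ((le_max_right N 0).trans_lt hΛ)
      (by positivity : 0 ≤ a / 4) fun s hs => (hN s (hΛN.trans hs).le).le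
    linarith

theorem stmt_5 (μ : Measure ℝ) [IsProbabilityMeasure μ]
    (h : Tendsto (fun Λ : ℝ => (1 / Λ) * ∫ l in Set.Ioo (-Λ) Λ, l ^ 2 ∂μ) atTop (𝓝 0)) :
    Tendsto (fun Λ : ℝ => Λ * (μ (Set.Ioo (-Λ) Λ)ᶜ).toReal) atTop (𝓝 0) ∧
      ∀ ε > (0 : ℝ), ∀ Λ₀ > (0 : ℝ),
        (∀ Λ > Λ₀, (1 / Λ) * ∫ l in Set.Ioo (-Λ) Λ, l ^ 2 ∂μ < ε) →
        ∀ Λ > Λ₀, Λ * (μ (Set.Ioo (-Λ) Λ)ᶜ).toReal ≤ 2 * ε :=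
  ⟨tendsto_mul_toReal_measure_compl_Ioo h, fun _ hε _ hΛ₀ H _ hΛ =>
    mul_toReal_measure_compl_Ioo_le (hΛ₀.trans hΛ) hε.le fun s hs => (H s (hΛ.trans hs)).le⟩
end

section
/- Let μ be a Borel probability measure on ℝ, A(s) = ∫_ℝ e^{−isλ} dμ(λ) and p(s) = |A(s)|². If (1/|s|)·∫_ℝ (1 − cos(λs)) dμ(λ) → 0 as s → 0, then p is differentiable at 0 with p'(0) = 0. -/
/-!
`A s` is the conjugate of `charFun μ s`, so `‖A s‖ ≤ 1` and `Re A(s) = ∫ cos (λ s) dμ`. Hence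
`1 - ‖A‖² = (1 - ‖A‖)(1 + ‖A‖) ≤ 2 (1 - ‖A‖) ≤ 2 (1 - Re A) = 2 ∫ (1 - cos (λ s)) dμ`.
As `p ≤ 1 = p 0`, the difference quotient of `p` at `0` is bounded by
`2 / |s| · ∫ (1 - cos (λ s)) dμ`, which tends to `0` by hypothesis.
-/

open MeasureTheory Filter Topology

lemma hasDerivAt_zero_of_abs_sub_le {f g : ℝ → ℝ} {a : ℝ} (hfg : ∀ x, |f x - f a| ≤ g x)
    (hg : Tendsto (fun x => (1 / |x - a|) * g x) (𝓝[≠] a) (𝓝 0)) : HasDerivAt f 0 a := by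
  rw [hasDerivAt_iff_tendsto_slope]
  refine squeeze_zero_norm' (Eventually.of_forall fun x => ?_) hg
  rw [slope_def_field, norm_div, Real.norm_eq_abs, Real.norm_eq_abs, div_eq_inv_mul, one_div]
  exact mul_le_mul_of_nonneg_left (hfg x) (inv_nonneg.mpr (abs_nonneg _))

lemma one_sub_sq_norm_le_two_mul_one_sub_re {z : ℂ} (hz : ‖z‖ ≤ 1) :
    1 - ‖z‖ ^ 2 ≤ 2 * (1 - z.re) := by
  nlinarith [Complex.re_le_norm z, norm_nonneg z]

lemma re_charFun_eq_integral_cos {μ : Measure ℝ} [IsFiniteMeasure μ] (t : ℝ) :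
    (charFun μ t).re = ∫ x, Real.cos (x * t) ∂μ := by
  have hint : Integrable (fun x : ℝ => Complex.exp (t * x * Complex.I)) μ :=
    Integrable.of_bound (by fun_prop) 1 (Eventually.of_forall fun x => by
      rw [← Complex.ofReal_mul, Complex.norm_exp_ofReal_mul_I])
  rw [charFun_apply_real, ← RCLike.re_to_complex, ← integral_re hint]
  congr 1 with x
  rw [RCLike.re_to_complex, ← Complex.ofReal_mul, Complex.exp_ofReal_mul_I_re, mul_comm]

lemma integral_one_sub_cos_eq_one_sub_re_charFun {μ : Measure ℝ} [IsProbabilityMeasure μ] (t : ℝ) :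
    ∫ x, (1 - Real.cos (x * t)) ∂μ = 1 - (charFun μ t).re := by
  have hint : Integrable (fun x => Real.cos (x * t)) μ :=
    Integrable.of_bound (by fun_prop) 1 (Eventually.of_forall fun x => by
      simpa using Real.abs_cos_le_one _)
  rw [integral_sub (integrable_const 1) hint, re_charFun_eq_integral_cos]
  simp

lemma one_sub_sq_norm_charFun_le {μ : Measure ℝ} [IsProbabilityMeasure μ] (t : ℝ) :
    1 - ‖charFun μ t‖ ^ 2 ≤ 2 * ∫ x, (1 - Real.cos (x * t)) ∂μ := by
  rw [integral_one_sub_cos_eq_one_sub_re_charFun]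
  exact one_sub_sq_norm_le_two_mul_one_sub_re (norm_charFun_le_one t)

lemma integral_exp_neg_mul_I_eq_conj_charFun (μ : Measure ℝ) (s : ℝ) :
    ∫ l : ℝ, Complex.exp (-(Complex.I * s * l)) ∂μ = (starRingEnd ℂ) (charFun μ s) := by
  rw [← charFun_neg, charFun_apply_real]
  congr 1 with l
  push_cast
  ring_nf

theorem stmt_7 (μ : Measure ℝ) [IsProbabilityMeasure μ]
    (A : ℝ → ℂ) (hA : ∀ s : ℝ, A s = ∫ l : ℝ, Complex.exp (-(Complex.I * s * l)) ∂μ)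
    (p : ℝ → ℝ) (hp : ∀ s : ℝ, p s = ‖A s‖ ^ 2)
    (h : Tendsto (fun s : ℝ => (1 / |s|) * ∫ l : ℝ, (1 - Real.cos (l * s)) ∂μ)
      (𝓝[≠] 0) (𝓝 0)) :
    HasDerivAt p 0 0 := by
  have hp_charFun : ∀ s, p s = ‖charFun μ s‖ ^ 2 := fun s => by
    rw [hp, hA, integral_exp_neg_mul_I_eq_conj_charFun, Complex.norm_conj]
  have hp0 : p 0 = 1 := by simp [hp_charFun]
  refine hasDerivAt_zero_of_abs_sub_le (g := fun s => 2 * ∫ l, (1 - Real.cos (l * s)) ∂μ)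
    (fun s => ?_) (by simpa [mul_left_comm] using h.const_mul 2)
  have hps : p s ≤ 1 := by
    rw [hp_charFun]
    exact pow_le_one₀ (norm_nonneg _) (norm_charFun_le_one s)
  rw [hp0, abs_of_nonpos (by linarith), neg_sub, hp_charFun]
  exact one_sub_sq_norm_charFun_le s
end

section
/- Let a > 1 and let μ be the Borel measure on ℝ defined by μ(E) = a·log a · ∫_{E ∩ [a,+∞)} (1 + log λ)/(λ² log² λ) dλ for every Borel set E ⊂ ℝ. Then: (i) μ(ℝ) = 1; (ii) for every Λ ≥ a, Λ·μ((−Λ,Λ)ᶜ) = a·log a / log Λ, so Λ·μ((−Λ,Λ)ᶜ) → 0 as Λ → +∞; (iii) ∫_ℝ λ dμ(λ) = +∞. -/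
/-!
The density is the derivative of `λ ↦ -a log a / (λ log λ)`, which tends to `0` at infinity,
so the mass of `[Λ, ∞)` is `a log a / (Λ log Λ)`; for `Λ = a` this is `1`. The first moment
diverges because `λ` times the density is the derivative of
`λ ↦ a log a (log log λ - 1 / log λ)`, which is unbounded.
-/

open MeasureTheory Filter Topology Set Real

section ImproperFTC

variable {g g' : ℝ → ℝ} {a : ℝ}

theorem lintegral_Ioi_ofReal_deriv_of_tendsto (hderiv : ∀ x ∈ Ici a, HasDerivAt g (g' x) x)
    (hg' : ∀ x ∈ Ioi a, 0 ≤ g' x) {m : ℝ} (hg : Tendsto g atTop (𝓝 m)) :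
    ∫⁻ x in Ioi a, ENNReal.ofReal (g' x) = ENNReal.ofReal (m - g a) := by
  rw [← ofReal_integral_eq_lintegral_ofReal (integrableOn_Ioi_deriv_of_nonneg' hderiv hg' hg)
    ((ae_restrict_iff' measurableSet_Ioi).mpr (.of_forall hg')),
    integral_Ioi_of_hasDerivAt_of_nonneg' hderiv hg' hg]

theorem lintegral_Ioi_ofReal_deriv_of_tendsto_atTop
    (hderiv : ∀ x ∈ Ici a, HasDerivAt g (g' x) x) (hg' : ∀ x ∈ Ioi a, 0 ≤ g' x)
    (hg : Tendsto g atTop atTop) :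
    ∫⁻ x in Ioi a, ENNReal.ofReal (g' x) = ⊤ := by
  refine ENNReal.eq_top_of_forall_nnreal_le fun r => ?_
  obtain ⟨b, hgb, hab⟩ :=
    ((hg.eventually_ge_atTop (r + g a)).and (eventually_ge_atTop a)).exists
  have hderiv' : ∀ x ∈ Ioo a b, HasDerivAt g (g' x) x := fun x hx => hderiv x hx.1.le
  have hcont : ContinuousOn g (Icc a b) := fun x hx =>
    (hderiv x hx.1).continuousAt.continuousWithinAt
  have hg'ab : ∀ x ∈ Ioo a b, 0 ≤ g' x := fun x hx => hg' x hx.1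
  have hint := intervalIntegral.integrableOn_deriv_of_nonneg hcont hderiv' hg'ab
  calc (r : ENNReal) ≤ ENNReal.ofReal (g b - g a) := by
        rw [← ENNReal.ofReal_coe_nnreal]; exact ENNReal.ofReal_le_ofReal (by linarith)
    _ = ENNReal.ofReal (∫ x in Ioc a b, g' x) := by
        rw [← intervalIntegral.integral_of_le hab,
          intervalIntegral.integral_eq_sub_of_hasDerivAt_of_le hab hcont hderiv'
            (intervalIntegrable_iff_integrableOn_Ioc_of_le hab |>.mpr hint)]
    _ = ∫⁻ x in Ioc a b, ENNReal.ofReal (g' x) :=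
        ofReal_integral_eq_lintegral_ofReal hint
          ((ae_restrict_iff' measurableSet_Ioc).mpr (.of_forall fun x hx => hg' x hx.1))
    _ ≤ ∫⁻ x in Ioi a, ENNReal.ofReal (g' x) := lintegral_mono_set Ioc_subset_Ioi_self

end ImproperFTC

lemma hasDerivAt_neg_div_mul_log (c : ℝ) {x : ℝ} (hx : 1 < x) :
    HasDerivAt (fun l => -c / (l * log l)) (c * (1 + log x) / (x ^ 2 * log x ^ 2)) x := by
  have hx0 : x ≠ 0 := by positivity
  have hlog : log x ≠ 0 := (log_pos hx).ne'
  refine ((hasDerivAt_const x (-c)).div ((hasDerivAt_id' x).mul (hasDerivAt_log hx0))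
    (mul_ne_zero hx0 hlog)).congr_deriv ?_
  simp only [Pi.mul_apply]
  field_simp
  ring

lemma hasDerivAt_log_log_sub_inv_log (c : ℝ) {x : ℝ} (hx : 1 < x) :
    HasDerivAt (fun l => c * (log (log l) - (log l)⁻¹))
      (c * (1 + log x) / (x * log x ^ 2)) x := by
  have hx0 : x ≠ 0 := by positivity
  have hlog : log x ≠ 0 := (log_pos hx).ne'
  have hl := hasDerivAt_log hx0
  refine (((hl.log hlog).sub (hl.inv hlog)).const_mul c).congr_deriv ?_
  field_simp
  ring

lemma lintegral_Ici_one_add_log_div_sq_mul_log_sq {c Λ : ℝ} (hc : 0 ≤ c) (hΛ : 1 < Λ) :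
    ∫⁻ x in Ici Λ, ENNReal.ofReal (c * (1 + log x) / (x ^ 2 * log x ^ 2)) =
      ENNReal.ofReal (c / (Λ * log Λ)) := by
  have hlim : Tendsto (fun l => -c / (l * log l)) atTop (𝓝 0) :=
    tendsto_const_nhds.div_atTop (tendsto_id.atTop_mul_atTop₀ tendsto_log_atTop)
  rw [setLIntegral_congr Ioi_ae_eq_Ici.symm, lintegral_Ioi_ofReal_deriv_of_tendsto
    (fun x hx => hasDerivAt_neg_div_mul_log c (hΛ.trans_le hx)) (fun x hx => ?_) hlim]
  · ring_nf
  · have hx1 : 1 < x := hΛ.trans hx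
    have := log_pos hx1
    have : 0 < x := by linarith
    positivity

lemma lintegral_Ici_one_add_log_div_mul_log_sq_eq_top {c a : ℝ} (hc : 0 < c) (ha : 1 < a) :
    ∫⁻ x in Ici a, ENNReal.ofReal (c * (1 + log x) / (x * log x ^ 2)) = ⊤ := by
  have hlim : Tendsto (fun l => c * (log (log l) - (log l)⁻¹)) atTop atTop := by
    refine Tendsto.const_mul_atTop hc ?_
    simpa only [Function.comp_def, sub_eq_add_neg] using
      (tendsto_log_atTop.comp tendsto_log_atTop).atTop_add
        ((tendsto_inv_atTop_zero.comp tendsto_log_atTop).neg)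
  rw [setLIntegral_congr Ioi_ae_eq_Ici.symm, lintegral_Ioi_ofReal_deriv_of_tendsto_atTop
    (fun x hx => hasDerivAt_log_log_sub_inv_log c (ha.trans_le hx)) (fun x hx => ?_) hlim]
  have hx1 : 1 < x := ha.trans hx
  have := log_pos hx1
  have : 0 < x := by linarith
  positivity

lemma compl_Ioo_neg_inter_Ici {a Λ : ℝ} (h₀ : -Λ < a) (h : a ≤ Λ) :
    (Ioo (-Λ) Λ)ᶜ ∩ Ici a = Ici Λ := by
  ext x
  simp only [mem_inter_iff, mem_compl_iff, mem_Ioo, mem_Ici, not_and_or, not_lt]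
  constructor
  · rintro ⟨hx | hx, hax⟩ <;> linarith
  · exact fun hx => ⟨Or.inr hx, h.trans hx⟩

noncomputable def logTailMeasure (a : ℝ) : Measure ℝ :=
  (volume.restrict (Ici a)).withDensity fun l =>
    ENNReal.ofReal (a * log a * (1 + log l) / (l ^ 2 * log l ^ 2))

section logTailMeasure

variable {a : ℝ}

lemma withDensity_ofReal_indicator_eq_logTailMeasure (a : ℝ) :
    volume.withDensity (fun l => ENNReal.ofReal (indicator (Ici a)
      (fun l => a * log a * (1 + log l) / (l ^ 2 * log l ^ 2)) l)) = logTailMeasure a := by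
  rw [logTailMeasure, ← withDensity_indicator measurableSet_Ici]
  congr 1
  funext l
  exact congr_fun (indicator_comp_of_zero ENNReal.ofReal_zero).symm l

lemma logTailMeasure_apply {s : Set ℝ} (hs : MeasurableSet s) :
    logTailMeasure a s =
      ∫⁻ x in s ∩ Ici a, ENNReal.ofReal (a * log a * (1 + log x) / (x ^ 2 * log x ^ 2)) := by
  rw [logTailMeasure, withDensity_apply _ hs, Measure.restrict_restrict hs]

lemma logTailMeasure_compl_Ioo (ha : 1 < a) {Λ : ℝ} (hΛ : a ≤ Λ) :
    logTailMeasure a (Ioo (-Λ) Λ)ᶜ = ENNReal.ofReal (a * log a / (Λ * log Λ)) := by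
  have := log_pos ha
  rw [logTailMeasure_apply measurableSet_Ioo.compl, compl_Ioo_neg_inter_Ici (by linarith) hΛ,
    lintegral_Ici_one_add_log_div_sq_mul_log_sq (by positivity) (ha.trans_le hΛ)]

lemma logTailMeasure_univ (ha : 1 < a) : logTailMeasure a univ = 1 := by
  have := log_pos ha
  rw [logTailMeasure_apply .univ, univ_inter,
    lintegral_Ici_one_add_log_div_sq_mul_log_sq (by positivity) ha,
    div_self (by positivity), ENNReal.ofReal_one]

lemma lintegral_ofReal_logTailMeasure (ha : 1 < a) :
    ∫⁻ l, ENNReal.ofReal l ∂logTailMeasure a = ⊤ := by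
  have := log_pos ha
  rw [logTailMeasure, lintegral_withDensity_eq_lintegral_mul _ (by fun_prop)
      ENNReal.measurable_ofReal,
    ← lintegral_Ici_one_add_log_div_mul_log_sq_eq_top (c := a * log a) (by positivity) ha]
  refine setLIntegral_congr_fun measurableSet_Ici fun x hx => ?_
  have hx1 : 1 < x := ha.trans_le hx
  have := log_pos hx1
  have : 0 < x := by linarith
  rw [Pi.mul_apply, ← ENNReal.ofReal_mul (by positivity)]
  congr 1
  field_simp

end logTailMeasure

theorem stmt_8 (a : ℝ) (ha : 1 < a) (μ : Measure ℝ)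
    (hμ : μ = volume.withDensity (fun l : ℝ =>
      ENNReal.ofReal (Set.indicator (Set.Ici a)
        (fun l : ℝ => a * Real.log a * (1 + Real.log l) / (l ^ 2 * Real.log l ^ 2)) l))) :
    μ Set.univ = 1 ∧
    (∀ Λ : ℝ, a ≤ Λ →
      Λ * (μ (Set.Ioo (-Λ) Λ)ᶜ).toReal = a * Real.log a / Real.log Λ) ∧
    Tendsto (fun Λ : ℝ => Λ * (μ (Set.Ioo (-Λ) Λ)ᶜ).toReal) atTop (𝓝 0) ∧
    ∫⁻ l : ℝ, ENNReal.ofReal l ∂μ = ⊤ := by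
  rw [withDensity_ofReal_indicator_eq_logTailMeasure] at hμ
  subst hμ
  have htail : ∀ Λ, a ≤ Λ →
      Λ * (logTailMeasure a (Ioo (-Λ) Λ)ᶜ).toReal = a * log a / log Λ := by
    intro Λ hΛ
    have := log_pos ha
    have := log_pos (ha.trans_le hΛ)
    have : 0 < Λ := by linarith
    rw [logTailMeasure_compl_Ioo ha hΛ, ENNReal.toReal_ofReal (by positivity)]
    field_simp
  refine ⟨logTailMeasure_univ ha, htail, ?_, lintegral_ofReal_logTailMeasure ha⟩
  refine ((tendsto_const_nhds (x := a * log a)).div_atTop tendsto_log_atTop).congr' ?_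
  filter_upwards [eventually_ge_atTop a] with Λ hΛ using (htail Λ hΛ).symm
end

section
/- Let μ be a Borel probability measure on ℝ supported on [0,+∞) (i.e. μ((−∞,0)) = 0) such that Λ·μ([Λ,+∞)) → 0 as Λ → +∞ and ∫_ℝ λ dμ(λ) = +∞. Then (1/s)·∫_ℝ sin(λs) dμ(λ) → +∞ as s → 0⁺. -/
/-!
Split `∫ sin (λ s) dμ` at `λ = 1/s`. Below the cut, Jordan's inequality `sin x ≥ 2x/π` on
`[0, π/2]` gives at least `(2/π) s ∫_{λ < 1/s} λ dμ`; above it, the integrand is at least `-1`.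
Dividing by `s`, the first term is `2/π` times a truncated first moment, which tends to `+∞`
because `λ` is not integrable, while the second is `-(1/s) μ([1/s, ∞))`, which tends to `0` by the
tail hypothesis.
-/

open MeasureTheory Filter Topology Set Real

section FirstMoment

variable {μ : Measure ℝ} [IsFiniteMeasure μ]

lemma integrableOn_id_Iio_of_ae_nonneg (h0 : ∀ᵐ l ∂μ, 0 ≤ l) (Λ : ℝ) :
    IntegrableOn (fun l : ℝ => l) (Iio Λ) μ := by
  refine Integrable.mono' (integrable_const (max Λ 0)) aestronglyMeasurable_id ?_
  filter_upwards [ae_restrict_of_ae h0, ae_restrict_mem measurableSet_Iio] with l hl hlΛ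
  rw [Real.norm_eq_abs, abs_of_nonneg hl]
  exact le_max_of_le_left hlΛ.le

lemma integrable_sin_mul_const (s : ℝ) : Integrable (fun l : ℝ => sin (l * s)) μ :=
  Integrable.mono' (integrable_const 1) (by fun_prop) (by simp [abs_sin_le_one])

lemma tendsto_setIntegral_Iio_id_atTop (h0 : ∀ᵐ l ∂μ, 0 ≤ l)
    (hint : ¬ Integrable (fun l : ℝ => l) μ) :
    Tendsto (fun Λ => ∫ l in Iio Λ, l ∂μ) atTop atTop := by
  have hmoment : ∫⁻ l, ENNReal.ofReal l ∂μ = ⊤ := by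
    by_contra h
    exact hint ((lintegral_ofReal_ne_top_iff_integrable aestronglyMeasurable_id h0).1 h)
  have hcont := tendsto_measure_iUnion_atTop (μ := μ.withDensity fun l => ENNReal.ofReal l)
    (monotone_Iio (α := ℝ))
  rw [iUnion_Iio, withDensity_apply _ MeasurableSet.univ, Measure.restrict_univ, hmoment]
    at hcont
  rw [← ENNReal.tendsto_ofReal_nhds_top]
  refine hcont.congr fun Λ => ?_
  rw [Function.comp_apply, withDensity_apply _ measurableSet_Iio,
    ofReal_integral_eq_lintegral_ofReal (integrableOn_id_Iio_of_ae_nonneg h0 Λ)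
      (ae_restrict_of_ae h0)]

lemma mul_setIntegral_Iio_le_setIntegral_sin (h0 : ∀ᵐ l ∂μ, 0 ≤ l) {s : ℝ} (hs : 0 < s) :
    2 / π * s * ∫ l in Iio s⁻¹, l ∂μ ≤ ∫ l in Iio s⁻¹, sin (l * s) ∂μ := by
  rw [← integral_const_mul]
  refine setIntegral_mono_ae_restrict ((integrableOn_id_Iio_of_ae_nonneg h0 _).const_mul _)
    (integrable_sin_mul_const s).integrableOn ?_
  filter_upwards [ae_restrict_of_ae h0, ae_restrict_mem measurableSet_Iio] with l hl hlt
  have hls : l * s ≤ 1 := by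
    rw [← le_div_iff₀ hs, one_div]
    exact hlt.le
  calc 2 / π * s * l = 2 / π * (l * s) := by ring
    _ ≤ sin (l * s) := mul_le_sin (by positivity) (hls.trans (by linarith [pi_gt_three]))

lemma neg_measureReal_le_setIntegral_sin (S : Set ℝ) (s : ℝ) :
    -μ.real S ≤ ∫ l in S, sin (l * s) ∂μ := by
  calc -μ.real S = ∫ _ in S, (-1 : ℝ) ∂μ := by simp
    _ ≤ ∫ l in S, sin (l * s) ∂μ :=
      setIntegral_mono (integrable_const _) (integrable_sin_mul_const s).integrableOn
        fun l => neg_one_le_sin _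

lemma two_div_pi_mul_setIntegral_Iio_sub_le_inv_mul_integral_sin (h0 : ∀ᵐ l ∂μ, 0 ≤ l)
    {s : ℝ} (hs : 0 < s) :
    2 / π * (∫ l in Iio s⁻¹, l ∂μ) - s⁻¹ * μ.real (Ici s⁻¹) ≤
      s⁻¹ * ∫ l, sin (l * s) ∂μ := by
  have hsplit :=
    integral_add_compl (measurableSet_Iio (a := s⁻¹)) (integrable_sin_mul_const (μ := μ) s)
  rw [compl_Iio] at hsplit
  have hbelow := mul_setIntegral_Iio_le_setIntegral_sin h0 hs
  have habove := neg_measureReal_le_setIntegral_sin (μ := μ) (Ici s⁻¹) s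
  calc 2 / π * (∫ l in Iio s⁻¹, l ∂μ) - s⁻¹ * μ.real (Ici s⁻¹)
      = s⁻¹ * (2 / π * s * (∫ l in Iio s⁻¹, l ∂μ) - μ.real (Ici s⁻¹)) := by
        field_simp
    _ ≤ s⁻¹ * ∫ l, sin (l * s) ∂μ := by
        gcongr
        linarith

end FirstMoment

theorem stmt_9 (μ : Measure ℝ) [IsProbabilityMeasure μ]
    (hsupp : μ (Set.Iio 0) = 0)
    (htail : Tendsto (fun Λ : ℝ => Λ * (μ (Set.Ici Λ)).toReal) atTop (𝓝 0))
    (hint : ¬ Integrable (fun l : ℝ => l) μ) :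
    Tendsto (fun s : ℝ => (1 / s) * ∫ l : ℝ, Real.sin (l * s) ∂μ) (𝓝[>] 0) atTop := by
  have h0 : ∀ᵐ l ∂μ, 0 ≤ l := by
    filter_upwards [measure_eq_zero_iff_ae_notMem.1 hsupp] with l hl using not_lt.1 hl
  have hinv : Tendsto (fun s : ℝ => s⁻¹) (𝓝[>] 0) atTop := tendsto_inv_nhdsGT_zero
  have hlower : Tendsto (fun s : ℝ => 2 / π * (∫ l in Iio s⁻¹, l ∂μ) - s⁻¹ * μ.real (Ici s⁻¹))
      (𝓝[>] 0) atTop := by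
    simpa only [sub_eq_add_neg, Function.comp_def, measureReal_def] using
      (((tendsto_setIntegral_Iio_id_atTop h0 hint).comp hinv).const_mul_atTop
        (by positivity)).atTop_add (htail.comp hinv).neg
  refine tendsto_atTop_mono' _ ?_ hlower
  filter_upwards [self_mem_nhdsWithin] with s hs
  simpa only [one_div] using two_div_pi_mul_setIntegral_Iio_sub_le_inv_mul_integral_sin h0 hs
end

section
/- Let μ be a Borel probability measure on ℝ such that Λ·μ((−Λ,Λ)ᶜ) → 0 as Λ → +∞. Then ∫_{(−π/s, π/s)} λ dμ(λ) − (1/s)·∫_ℝ sin(λs) dμ(λ) → 0 as s → 0⁺. -/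
/-!
Put `Λ = π / s`. Outside `(-Λ, Λ)` the integrand `sin (l s) / s` is bounded by `1 / s`, which
contributes at most `Λ μ((-Λ, Λ)ᶜ) / π`. Inside, `|x - sin x| ≤ |x|³ / 6` with `|l s| < π` bounds
the difference by `(π s / 6) ∫_{(-Λ, Λ)} l² dμ`, so everything reduces to the truncated second
moment being `o(Λ)`. By the layer cake formula it is at most `∫₀^Λ 2t μ((-t, t)ᶜ) dt`, and the
integrand is small for large `t` by hypothesis.
-/

open MeasureTheory Filter Topology Real Set

theorem abs_sub_sin_mul_div_le {s l : ℝ} (hs : 0 < s) (hl : |l| ≤ π / s) :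
    |l - sin (l * s) / s| ≤ π * s / 6 * l ^ 2 := by
  have hls : |l| * s ≤ π := (le_div_iff₀ hs).1 hl
  have key := abs_sub_sin_le (l * s)
  rw [abs_mul, abs_of_pos hs] at key
  have hfactor : l * s - sin (l * s) = (l - sin (l * s) / s) * s := by field_simp
  calc |l - sin (l * s) / s| = |l * s - sin (l * s)| / s := by
        rw [hfactor, abs_mul, abs_of_pos hs, mul_div_cancel_right₀ _ hs.ne']
    _ ≤ (|l| * s) ^ 3 / 6 / s := by gcongr
    _ = (|l| * s) * s / 6 * l ^ 2 := by field_simp; rw [← sq_abs l]; ring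
    _ ≤ π * s / 6 * l ^ 2 := by gcongr

section LayerCake

variable {α : Type*} [MeasurableSpace α] (μ : Measure α) {f : α → ℝ}

theorem lintegral_ofReal_sq_eq_lintegral_meas_le_mul (hf_nn : 0 ≤ᵐ[μ] f)
    (hf : AEMeasurable f μ) :
    ∫⁻ a, ENNReal.ofReal (f a ^ 2) ∂μ
      = ∫⁻ t in Ioi 0, μ {a | t ≤ f a} * ENNReal.ofReal (2 * t) := by
  have key := lintegral_comp_eq_lintegral_meas_le_mul μ hf_nn hf (g := fun t => 2 * t)
    (fun t _ => (continuous_const.mul continuous_id).intervalIntegrable 0 t)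
    ((ae_restrict_iff' measurableSet_Ioi).2 (ae_of_all _ fun t (ht : 0 < t) => by positivity))
  have hG : ∀ x : ℝ, ∫ t in 0..x, 2 * t = x ^ 2 := fun x => by
    rw [intervalIntegral.integral_const_mul, integral_id]; ring
  simpa only [hG] using key

variable [IsFiniteMeasure μ] {M Λ ε : ℝ}

theorem lintegral_ofReal_sq_le_of_mul_measureReal_le (hf_nn : 0 ≤ f) (hf : Measurable f)
    (hM : 0 ≤ M) (hMΛ : M ≤ Λ) (hε : 0 ≤ ε) (hfΛ : ∀ a, f a ≤ Λ)
    (htail : ∀ t ∈ Ioc M Λ, t * μ.real {a | t ≤ f a} ≤ ε) :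
    ∫⁻ a, ENNReal.ofReal (f a ^ 2) ∂μ ≤ ENNReal.ofReal (2 * μ.real univ * M ^ 2 + 2 * ε * Λ) := by
  have hμ : 0 ≤ μ.real univ := measureReal_nonneg
  have hbound : ∀ t ∈ Ioi (0 : ℝ), μ {a | t ≤ f a} * ENNReal.ofReal (2 * t) ≤
      (Ioc 0 M).indicator (fun _ => μ univ * ENNReal.ofReal (2 * M)) t
        + (Ioc M Λ).indicator (fun _ => ENNReal.ofReal (2 * ε)) t := by
    intro t (ht : 0 < t)
    rcases le_or_gt t M with htM | hMt
    · rw [indicator_of_mem (show t ∈ Ioc 0 M from ⟨ht, htM⟩)]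
      exact le_add_right (mul_le_mul' (measure_mono (subset_univ _))
        (ENNReal.ofReal_le_ofReal (by linarith)))
    rcases le_or_gt t Λ with htΛ | hΛt
    · rw [indicator_of_mem (show t ∈ Ioc M Λ from ⟨hMt, htΛ⟩), ← ofReal_measureReal,
        ← ENNReal.ofReal_mul (by positivity)]
      refine le_add_left (ENNReal.ofReal_le_ofReal ?_)
      linarith [htail t ⟨hMt, htΛ⟩]
    · have hempty : {a | t ≤ f a} = ∅ :=
        eq_empty_of_forall_notMem fun a (ha : t ≤ f a) => (hfΛ a).not_gt (hΛt.trans_le ha)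
      simp [hempty]
  rw [lintegral_ofReal_sq_eq_lintegral_meas_le_mul μ (ae_of_all _ hf_nn) hf.aemeasurable]
  calc _ ≤ ∫⁻ t in Ioi 0, (Ioc 0 M).indicator (fun _ => μ univ * ENNReal.ofReal (2 * M)) t
          + (Ioc M Λ).indicator (fun _ => ENNReal.ofReal (2 * ε)) t :=
        setLIntegral_mono (by measurability) hbound
    _ ≤ ∫⁻ t, (Ioc 0 M).indicator (fun _ => μ univ * ENNReal.ofReal (2 * M)) t
          + (Ioc M Λ).indicator (fun _ => ENNReal.ofReal (2 * ε)) t :=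
        setLIntegral_le_lintegral _ _
    _ = μ univ * ENNReal.ofReal (2 * M) * ENNReal.ofReal M
          + ENNReal.ofReal (2 * ε) * ENNReal.ofReal (Λ - M) := by
        rw [lintegral_add_left (measurable_const.indicator measurableSet_Ioc),
          lintegral_indicator_const measurableSet_Ioc, lintegral_indicator_const measurableSet_Ioc,
          Real.volume_Ioc, Real.volume_Ioc, sub_zero]
    _ ≤ ENNReal.ofReal (2 * μ.real univ * M ^ 2 + 2 * ε * Λ) := by
        rw [← ofReal_measureReal, ← ENNReal.ofReal_mul hμ, ← ENNReal.ofReal_mul (by positivity),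
          ← ENNReal.ofReal_mul (by positivity), ← ENNReal.ofReal_add (by positivity) (by nlinarith)]
        exact ENNReal.ofReal_le_ofReal (by nlinarith)

theorem integral_sq_le_of_mul_measureReal_le (hf_nn : 0 ≤ f) (hf : Measurable f)
    (hM : 0 ≤ M) (hMΛ : M ≤ Λ) (hε : 0 ≤ ε) (hfΛ : ∀ a, f a ≤ Λ)
    (htail : ∀ t ∈ Ioc M Λ, t * μ.real {a | t ≤ f a} ≤ ε) :
    ∫ a, f a ^ 2 ∂μ ≤ 2 * μ.real univ * M ^ 2 + 2 * ε * Λ := by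
  have hμ : 0 ≤ μ.real univ := measureReal_nonneg
  have hΛ : 0 ≤ Λ := hM.trans hMΛ
  rw [integral_eq_lintegral_of_nonneg_ae (ae_of_all _ fun a => sq_nonneg (f a))
    (hf.pow_const 2).aestronglyMeasurable]
  exact ENNReal.toReal_le_of_le_ofReal (by positivity)
    (lintegral_ofReal_sq_le_of_mul_measureReal_le μ hf_nn hf hM hMΛ hε hfΛ htail)

end LayerCake

theorem setIntegral_sq_le_of_mul_measureReal_compl_le (μ : Measure ℝ) [IsFiniteMeasure μ]
    {M Λ ε : ℝ} (hM : 0 ≤ M) (hMΛ : M ≤ Λ) (hε : 0 ≤ ε)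
    (htail : ∀ t ∈ Ioc M Λ, t * μ.real (Ioo (-t) t)ᶜ ≤ ε) :
    ∫ l in Ioo (-Λ) Λ, l ^ 2 ∂μ ≤ 2 * μ.real univ * M ^ 2 + 2 * ε * Λ := by
  set f := (Ioo (-Λ) Λ).indicator fun l : ℝ => |l|
  have hf_le_abs : ∀ l, f l ≤ |l| := indicator_le_self' fun l _ => abs_nonneg l
  have hf_le : ∀ l, f l ≤ Λ := fun l => by
    by_cases hl : l ∈ Ioo (-Λ) Λ
    · simpa [f, hl] using (abs_lt.2 hl).le
    · simpa [f, hl] using hM.trans hMΛ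
  have hsq : ∫ l in Ioo (-Λ) Λ, l ^ 2 ∂μ = ∫ l, f l ^ 2 ∂μ := by
    rw [← integral_indicator measurableSet_Ioo]
    congr with l
    by_cases hl : l ∈ Ioo (-Λ) Λ <;> simp [f, hl]
  rw [hsq]
  refine integral_sq_le_of_mul_measureReal_le μ (indicator_nonneg fun l _ => abs_nonneg l)
    (measurable_abs.indicator measurableSet_Ioo) hM hMΛ hε hf_le fun t ht => ?_
  have hsub : {l | t ≤ f l} ⊆ (Ioo (-t) t)ᶜ := fun l (hl : t ≤ f l) hlt =>
    (hl.trans (hf_le_abs l)).not_gt (abs_lt.2 hlt)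
  exact (mul_le_mul_of_nonneg_left (measureReal_mono hsub) (hM.trans ht.1.le)).trans (htail t ht)

theorem tendsto_inv_mul_setIntegral_sq_atTop (μ : Measure ℝ) [IsFiniteMeasure μ]
    (htail : Tendsto (fun Λ => Λ * μ.real (Ioo (-Λ) Λ)ᶜ) atTop (𝓝 0)) :
    Tendsto (fun Λ => Λ⁻¹ * ∫ l in Ioo (-Λ) Λ, l ^ 2 ∂μ) atTop (𝓝 0) := by
  refine Metric.tendsto_atTop.2 fun ε hε => ?_
  obtain ⟨M₀, hM₀⟩ := Metric.tendsto_atTop.1 htail (ε / 4) (by positivity)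
  set M := max M₀ 0
  have htail' : ∀ t, M ≤ t → t * μ.real (Ioo (-t) t)ᶜ ≤ ε / 4 := fun t ht => by
    have := hM₀ t ((le_max_left _ _).trans ht)
    rw [Real.dist_eq, sub_zero] at this
    exact (le_abs_self _).trans this.le
  refine ⟨max M (4 * μ.real univ * M ^ 2 / ε + 1), fun Λ hΛ => ?_⟩
  have hMΛ : M ≤ Λ := (le_max_left _ _).trans hΛ
  have hΛ_large : 4 * μ.real univ * M ^ 2 < ε * Λ := by
    rw [← div_lt_iff₀' hε]
    linarith [le_max_right M (4 * μ.real univ * M ^ 2 / ε + 1)]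
  have hM : 0 ≤ M := le_max_right _ _
  have hΛ : 0 < Λ := by nlinarith [measureReal_nonneg (μ := μ) (s := univ)]
  have hI_nonneg : 0 ≤ ∫ l in Ioo (-Λ) Λ, l ^ 2 ∂μ :=
    setIntegral_nonneg measurableSet_Ioo fun l _ => sq_nonneg l
  have hI := setIntegral_sq_le_of_mul_measureReal_compl_le μ hM hMΛ (by positivity)
    fun t ht => htail' t ht.1.le
  rw [Real.dist_eq, sub_zero, abs_of_nonneg (by positivity), inv_mul_lt_iff₀ hΛ]
  linarith

theorem abs_setIntegral_sub_integral_sin_le (μ : Measure ℝ) [IsFiniteMeasure μ] {s : ℝ}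
    (hs : 0 < s) :
    |(∫ l in Ioo (-(π / s)) (π / s), l ∂μ) - (1 / s) * ∫ l, sin (l * s) ∂μ|
      ≤ π ^ 2 / 6 * ((π / s)⁻¹ * ∫ l in Ioo (-(π / s)) (π / s), l ^ 2 ∂μ)
        + π⁻¹ * (π / s * μ.real (Ioo (-(π / s)) (π / s))ᶜ) := by
  set Λ := π / s
  have hsin : Integrable (fun l => sin (l * s) / s) μ := by
    refine Integrable.of_bound (by fun_prop) (1 / s) (ae_of_all _ fun l => ?_)
    simp only [norm_div, Real.norm_eq_abs, abs_of_pos hs]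
    gcongr
    exact abs_sin_le_one _
  have hid : IntegrableOn (fun l => l) (Ioo (-Λ) Λ) μ :=
    IntegrableOn.of_bound (measure_lt_top _ _) aestronglyMeasurable_id Λ
      ((ae_restrict_iff' measurableSet_Ioo).2 (ae_of_all _ fun l hl => (abs_lt.2 hl).le))
  have hsq : IntegrableOn (fun l => l ^ 2) (Ioo (-Λ) Λ) μ :=
    IntegrableOn.of_bound (measure_lt_top _ _) (by fun_prop) (Λ ^ 2)
      ((ae_restrict_iff' measurableSet_Ioo).2 (ae_of_all _ fun l hl => by
        simpa [sq_abs] using pow_le_pow_left₀ (abs_nonneg l) (abs_lt.2 hl).le 2))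
  have hdecomp : (∫ l in Ioo (-Λ) Λ, l ∂μ) - (1 / s) * ∫ l, sin (l * s) ∂μ
      = (∫ l in Ioo (-Λ) Λ, (l - sin (l * s) / s) ∂μ)
        - ∫ l in (Ioo (-Λ) Λ)ᶜ, sin (l * s) / s ∂μ := by
    rw [one_div_mul_eq_div, ← integral_div, ← integral_add_compl measurableSet_Ioo hsin,
      integral_sub hid hsin.integrableOn]
    ring
  have hwindow : |∫ l in Ioo (-Λ) Λ, (l - sin (l * s) / s) ∂μ|
      ≤ π * s / 6 * ∫ l in Ioo (-Λ) Λ, l ^ 2 ∂μ := by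
    rw [← integral_const_mul]
    exact norm_integral_le_of_norm_le (f := fun l => l - sin (l * s) / s) (hsq.const_mul _)
      ((ae_restrict_iff' measurableSet_Ioo).2
        (ae_of_all _ fun l hl => abs_sub_sin_mul_div_le hs (abs_lt.2 hl).le))
  have htail : |∫ l in (Ioo (-Λ) Λ)ᶜ, sin (l * s) / s ∂μ| ≤ 1 / s * μ.real (Ioo (-Λ) Λ)ᶜ := by
    refine norm_setIntegral_le_of_norm_le_const (f := fun l => sin (l * s) / s)
      (measure_lt_top _ _) fun l _ => ?_
    simp only [norm_div, Real.norm_eq_abs, abs_of_pos hs]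
    gcongr
    exact abs_sin_le_one _
  rw [hdecomp]
  calc _ ≤ _ := abs_sub _ _
    _ ≤ _ := add_le_add hwindow htail
    _ = _ := by simp only [Λ]; field_simp

theorem stmt_12 (μ : Measure ℝ) [IsProbabilityMeasure μ]
    (htail : Tendsto (fun Λ : ℝ => Λ * (μ (Set.Ioo (-Λ) Λ)ᶜ).toReal) atTop (𝓝 0)) :
    Tendsto (fun s : ℝ =>
        (∫ l in Set.Ioo (-(π / s)) (π / s), l ∂μ) - (1 / s) * ∫ l : ℝ, Real.sin (l * s) ∂μ)
      (𝓝[>] 0) (𝓝 0) := by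
  have hΛ : Tendsto (fun s : ℝ => π / s) (𝓝[>] 0) atTop := by
    simpa only [div_eq_mul_inv] using tendsto_inv_nhdsGT_zero.const_mul_atTop pi_pos
  have hbound :=
    (((tendsto_inv_mul_setIntegral_sq_atTop μ htail).comp hΛ).const_mul (π ^ 2 / 6)).add
      ((htail.comp hΛ).const_mul π⁻¹)
  rw [mul_zero, mul_zero, add_zero] at hbound
  refine squeeze_zero_norm' ?_ hbound
  filter_upwards [self_mem_nhdsWithin] with s hs using abs_setIntegral_sub_integral_sin_le μ hs
end

section
/- Let H be a complex Hilbert space, U : ℝ → B(H) a strongly continuous one-parameter unitary group, and P a finite-rank orthogonal projection on H. Define V(s) = P U(s) P and, for N ≥ 1, Z_N(t) = ((V(t/N))^N)* (V(t/N))^N. Then the following are equivalent: (a) ‖V(s)* V(s) − P‖ / |s| → 0 as s → 0 (i.e. s ↦ V(s)*V(s) is differentiable at s = 0 in operator norm with derivative 0); (b) for every T > 0, sup_{|t|≤T} ‖Z_N(t) − P‖ → 0 as N → +∞. -/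
/-!
Write `g(s) = ‖V(s)†V(s) - P‖` and `D_N(t) = ‖Z_N(t) - P‖`. For a contraction `W = W P = P W`,
the bound `‖P - W†W‖ ≤ c` says exactly that `‖W x‖² ≥ (1 - c) ‖x‖²` on `range P`, because
`0 ≤ P - W†W ≤ c P` in the Loewner order. Iterating this lower bound gives
`D_N(t) ≤ N g(t/N) = |t| g(s)/|s|` with `s = t/N`, which is (a) ⇒ (b).

Conversely, on the finite-dimensional space `range P` of dimension `d`, `|det W|²` is the product of
the eigenvalues of `W†W`, all in `[0, 1]`: it is at most the smallest one, and at least `m^d` when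
`W†W ≥ m`. Applied to `W = V(s)` and `W = V(s)^N` this gives
`(1 - D_N(N s))^d ≤ |det V(s)|^(2N) ≤ (1 - g(s))^N`, hence `N g(s) ≤ -d log (1 - D_N(N s))`;
taking `N = ⌊1/|s|⌋` yields (b) ⇒ (a).
-/

open Module RCLike Filter Topology ContinuousLinearMap

namespace LinearMap

variable {𝕜 E : Type*} [RCLike 𝕜] [NormedAddCommGroup E] [InnerProductSpace 𝕜 E]
  [FiniteDimensional 𝕜 E] {n : ℕ}

theorem IsSymmetric.re_inner_apply_self_eq_sum {T : E →ₗ[𝕜] E} (hT : T.IsSymmetric)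
    (hn : finrank 𝕜 E = n) (x : E) :
    re (inner 𝕜 (T x) x) =
      ∑ i, hT.eigenvalues hn i * ‖inner 𝕜 (hT.eigenvectorBasis hn i) x‖ ^ 2 := by
  rw [← (hT.eigenvectorBasis hn).sum_inner_mul_inner, map_sum]
  refine Finset.sum_congr rfl fun i _ => ?_
  rw [hT x, hT.apply_eigenvectorBasis, inner_smul_right, ← inner_conj_symm x, mul_assoc,
    RCLike.conj_mul]
  norm_cast

theorem norm_apply_sq_eq_re_inner_adjoint_comp_self (w : E →ₗ[𝕜] E) (x : E) :
    ‖w x‖ ^ 2 = re (inner 𝕜 ((adjoint w ∘ₗ w) x) x) := by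
  rw [comp_apply, adjoint_inner_left, inner_self_eq_norm_sq]

theorem eigenvalues_adjoint_comp_self (w : E →ₗ[𝕜] E) (hn : finrank 𝕜 E = n) (i : Fin n) :
    w.isSymmetric_adjoint_comp_self.eigenvalues hn i =
      ‖w (w.isSymmetric_adjoint_comp_self.eigenvectorBasis hn i)‖ ^ 2 := by
  rw [norm_apply_sq_eq_re_inner_adjoint_comp_self, IsSymmetric.apply_eigenvectorBasis,
    inner_smul_left, inner_self_eq_norm_sq_to_K, (OrthonormalBasis.orthonormal _).1]
  simp

theorem norm_det_sq_eq_prod_eigenvalues (w : E →ₗ[𝕜] E) (hn : finrank 𝕜 E = n) :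
    ‖w.det‖ ^ 2 = ∏ i, w.isSymmetric_adjoint_comp_self.eigenvalues hn i := by
  have h := w.normDet_sq
  rw [normDet_eq_norm_det, w.isSymmetric_adjoint_comp_self.det_eq_prod_eigenvalues hn] at h
  exact_mod_cast h

theorem pow_finrank_le_norm_det_sq (w : E →ₗ[𝕜] E) {m : ℝ} (hm : 0 ≤ m)
    (h : ∀ x, m * ‖x‖ ^ 2 ≤ ‖w x‖ ^ 2) : m ^ finrank 𝕜 E ≤ ‖w.det‖ ^ 2 := by
  set b := w.isSymmetric_adjoint_comp_self.eigenvectorBasis rfl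
  rw [norm_det_sq_eq_prod_eigenvalues w rfl]
  calc m ^ finrank 𝕜 E = ∏ _i : Fin (finrank 𝕜 E), m := by simp
    _ ≤ _ := Finset.prod_le_prod (fun _ _ => hm) fun i _ => by
      simpa [eigenvalues_adjoint_comp_self, b.orthonormal.1 i] using h (b i)

variable {w : E →ₗ[𝕜] E}

theorem eigenvalues_adjoint_comp_self_le_one (hw : ∀ x, ‖w x‖ ≤ ‖x‖) (hn : finrank 𝕜 E = n)
    (i : Fin n) : w.isSymmetric_adjoint_comp_self.eigenvalues hn i ≤ 1 := by
  rw [eigenvalues_adjoint_comp_self]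
  have := hw (w.isSymmetric_adjoint_comp_self.eigenvectorBasis hn i)
  rw [(OrthonormalBasis.orthonormal _).1] at this
  exact pow_le_one₀ (norm_nonneg _) this

theorem norm_det_sq_le_eigenvalues (hw : ∀ x, ‖w x‖ ≤ ‖x‖) (hn : finrank 𝕜 E = n) (i : Fin n) :
    ‖w.det‖ ^ 2 ≤ w.isSymmetric_adjoint_comp_self.eigenvalues hn i := by
  have hnonneg := w.isPositive_adjoint_comp_self.nonneg_eigenvalues hn
  rw [norm_det_sq_eq_prod_eigenvalues w hn, ← Finset.mul_prod_erase _ _ (Finset.mem_univ i)]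
  exact mul_le_of_le_one_right (hnonneg i) <| Finset.prod_le_one (fun j _ => hnonneg j)
    fun j _ => eigenvalues_adjoint_comp_self_le_one hw hn j

theorem norm_det_le_one (hw : ∀ x, ‖w x‖ ≤ ‖x‖) : ‖w.det‖ ≤ 1 := by
  have hnonneg := w.isPositive_adjoint_comp_self.nonneg_eigenvalues rfl
  rw [← sq_le_one_iff₀ (norm_nonneg _), norm_det_sq_eq_prod_eigenvalues w rfl]
  exact Finset.prod_le_one (fun j _ => hnonneg j)
    fun j _ => eigenvalues_adjoint_comp_self_le_one hw rfl j

theorem norm_det_sq_mul_norm_sq_le (hw : ∀ x, ‖w x‖ ≤ ‖x‖) (x : E) :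
    ‖w.det‖ ^ 2 * ‖x‖ ^ 2 ≤ ‖w x‖ ^ 2 := by
  set hT := w.isSymmetric_adjoint_comp_self
  rw [norm_apply_sq_eq_re_inner_adjoint_comp_self, hT.re_inner_apply_self_eq_sum rfl,
    ← (hT.eigenvectorBasis rfl).sum_sq_norm_inner_right x, Finset.mul_sum]
  exact Finset.sum_le_sum fun i _ => by gcongr; exact norm_det_sq_le_eigenvalues hw rfl i

end LinearMap

namespace ContinuousLinearMap

variable {H : Type*} [NormedAddCommGroup H] [InnerProductSpace ℂ H] {P W : H →L[ℂ] H}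

theorem norm_pow_le_one (hW : ‖W‖ ≤ 1) (n : ℕ) : ‖W ^ n‖ ≤ 1 := by
  rcases n.eq_zero_or_pos with rfl | hn
  · exact norm_id_le
  · exact (norm_pow_le' W hn).trans (pow_le_one₀ (norm_nonneg _) hW)

theorem pow_mul_eq_of_mul_eq (hWP : W * P = W) {N : ℕ} (hN : N ≠ 0) : W ^ N * P = W ^ N := by
  obtain ⟨k, rfl⟩ := Nat.exists_eq_succ_of_ne_zero hN
  rw [pow_succ, mul_assoc, hWP]

theorem apply_mem_range_of_mul_eq (hPW : P * W = W) (x : H) :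
    W x ∈ LinearMap.range (P : H →ₗ[ℂ] H) :=
  ⟨W x, by rw [coe_coe, ← mul_apply_eq_comp, hPW]⟩

theorem IsIdempotentElem.mem_range_iff (hP : IsIdempotentElem P) {x : H} :
    x ∈ LinearMap.range (P : H →ₗ[ℂ] H) ↔ P x = x :=
  LinearMap.IsIdempotentElem.mem_range_iff hP.toLinearMap

theorem norm_apply_le_norm_apply_of_mul_eq (hWP : W * P = W) (hW : ‖W‖ ≤ 1) (x : H) :
    ‖W x‖ ≤ ‖P x‖ := by
  rw [← hWP, mul_apply_eq_comp]
  exact (le_opNorm W (P x)).trans (mul_le_of_le_one_left (norm_nonneg _) hW)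

variable [CompleteSpace H]

theorem _root_.IsStarProjection.re_inner_apply_self (hP : IsStarProjection P) (x : H) :
    re (inner ℂ (P x) x) = ‖P x‖ ^ 2 := by
  conv_lhs => rw [← hP.isIdempotentElem.eq, mul_apply_eq_comp, ← adjoint_inner_right,
    ← star_eq_adjoint, hP.isSelfAdjoint.star_eq]
  exact inner_self_eq_norm_sq _

theorem re_inner_adjoint_mul_self_apply (W : H →L[ℂ] H) (x : H) :
    re (inner ℂ ((adjoint W * W) x) x) = ‖W x‖ ^ 2 :=
  (W.apply_norm_sq_eq_inner_adjoint_left x).symm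

theorem isSelfAdjoint_adjoint_mul_self (W : H →L[ℂ] H) : IsSelfAdjoint (adjoint W * W) := by
  rw [← star_eq_adjoint]
  exact .star_mul_self W

theorem norm_sub_adjoint_mul_self_le_iff (hP : IsStarProjection P) (hWP : W * P = W)
    (hW : ‖W‖ ≤ 1) {c : ℝ} (hc : 0 ≤ c) :
    ‖P - adjoint W * W‖ ≤ c ↔
      ∀ x ∈ LinearMap.range (P : H →ₗ[ℂ] H), (1 - c) * ‖x‖ ^ 2 ≤ ‖W x‖ ^ 2 := by
  constructor
  · intro h x hx
    have hq : re (inner ℂ ((P - adjoint W * W) x) x) = ‖x‖ ^ 2 - ‖W x‖ ^ 2 := by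
      rw [sub_apply, inner_sub_left, map_sub, re_inner_adjoint_mul_self_apply,
        hP.re_inner_apply_self, (IsIdempotentElem.mem_range_iff hP.isIdempotentElem).1 hx]
    have : ‖x‖ ^ 2 - ‖W x‖ ^ 2 ≤ c * ‖x‖ ^ 2 :=
      calc ‖x‖ ^ 2 - ‖W x‖ ^ 2 ≤ ‖(P - adjoint W * W) x‖ * ‖x‖ :=
            hq ▸ (re_le_norm _).trans (norm_inner_le_norm _ _)
        _ ≤ ‖P - adjoint W * W‖ * ‖x‖ * ‖x‖ := by gcongr; exact le_opNorm _ _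
        _ ≤ c * ‖x‖ ^ 2 := by rw [sq, ← mul_assoc]; gcongr
    linarith
  · intro h
    have hnonneg : 0 ≤ P - adjoint W * W := by
      rw [nonneg_iff_isPositive, isPositive_def']
      refine ⟨hP.isSelfAdjoint.sub (isSelfAdjoint_adjoint_mul_self W), fun x => ?_⟩
      rw [reApplyInnerSelf_apply, sub_apply, inner_sub_left, map_sub,
        re_inner_adjoint_mul_self_apply, hP.re_inner_apply_self, sub_nonneg]
      gcongr
      exact norm_apply_le_norm_apply_of_mul_eq hWP hW x
    have hle : P - adjoint W * W ≤ c • P := by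
      rw [le_def, isPositive_def']
      refine ⟨((IsSelfAdjoint.all c).smul hP.isSelfAdjoint).sub
        (hP.isSelfAdjoint.sub (isSelfAdjoint_adjoint_mul_self W)), fun x => ?_⟩
      have hx := h (P x) ⟨x, rfl⟩
      rw [← mul_apply_eq_comp, hWP] at hx
      rw [reApplyInnerSelf_apply, sub_apply, sub_apply, smul_apply, inner_sub_left, inner_sub_left,
        map_sub, map_sub, re_inner_adjoint_mul_self_apply, hP.re_inner_apply_self,
        RCLike.real_smul_eq_coe_smul (K := ℂ), inner_smul_real_left, smul_re,
        hP.re_inner_apply_self]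
      linarith
    calc ‖P - adjoint W * W‖ ≤ ‖c • P‖ := CStarAlgebra.norm_le_norm_of_nonneg_of_le hnonneg hle
      _ ≤ c := by
        rw [norm_smul, Real.norm_of_nonneg hc]
        exact mul_le_of_le_one_right hc (hP.norm_le P)

theorem norm_sub_adjoint_mul_self_le_one (hP : IsStarProjection P) (hWP : W * P = W)
    (hW : ‖W‖ ≤ 1) : ‖P - adjoint W * W‖ ≤ 1 :=
  (norm_sub_adjoint_mul_self_le_iff hP hWP hW zero_le_one).2 fun x _ => by
    rw [sub_self, zero_mul]
    positivity

theorem norm_sub_adjoint_pow_mul_pow_le (hP : IsStarProjection P) (hWP : W * P = W)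
    (hPW : P * W = W) (hW : ‖W‖ ≤ 1) {N : ℕ} (hN : N ≠ 0) :
    ‖P - adjoint (W ^ N) * W ^ N‖ ≤ N * ‖P - adjoint W * W‖ := by
  set g := ‖P - adjoint W * W‖
  have hstep : ∀ x ∈ LinearMap.range (P : H →ₗ[ℂ] H), (1 - g) * ‖x‖ ^ 2 ≤ ‖W x‖ ^ 2 :=
    (norm_sub_adjoint_mul_self_le_iff hP hWP hW (norm_nonneg _)).1 le_rfl
  have hiter : ∀ n : ℕ, ∀ x ∈ LinearMap.range (P : H →ₗ[ℂ] H),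
      (1 - n * g) * ‖x‖ ^ 2 ≤ ‖(W ^ n) x‖ ^ 2 := by
    intro n
    induction n with
    | zero => simp
    | succ n ih =>
      intro x hx
      have hy : (W ^ n) x ∈ LinearMap.range (P : H →ₗ[ℂ] H) := by
        rcases n with _ | n
        · simpa using hx
        · rw [pow_succ' W n, mul_apply_eq_comp]
          exact apply_mem_range_of_mul_eq hPW _
      have hyx : ‖(W ^ n) x‖ ^ 2 ≤ ‖x‖ ^ 2 := by
        gcongr
        exact (le_opNorm _ _).trans (mul_le_of_le_one_left (norm_nonneg _) (norm_pow_le_one hW n))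
      rw [pow_succ' W n, mul_apply_eq_comp, Nat.cast_succ]
      nlinarith [hstep _ hy, ih x hx, norm_nonneg (P - adjoint W * W)]
  refine (norm_sub_adjoint_mul_self_le_iff hP (pow_mul_eq_of_mul_eq hWP hN) (norm_pow_le_one hW N)
    (by positivity)).2 (hiter N)

theorem one_sub_norm_sub_adjoint_pow_mul_pow_pow_finrank_le (hP : IsStarProjection P)
    (hWP : W * P = W) (hPW : P * W = W) (hW : ‖W‖ ≤ 1)
    [FiniteDimensional ℂ (LinearMap.range (P : H →ₗ[ℂ] H))] {N : ℕ} (hN : N ≠ 0) :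
    (1 - ‖P - adjoint (W ^ N) * W ^ N‖) ^ finrank ℂ (LinearMap.range (P : H →ₗ[ℂ] H)) ≤
      (1 - ‖P - adjoint W * W‖) ^ N := by
  set w := (W : H →ₗ[ℂ] H).restrict fun x _ => apply_mem_range_of_mul_eq hPW x
  have hw_pow : ∀ (n : ℕ) (x : LinearMap.range (P : H →ₗ[ℂ] H)), ((w ^ n) x : H) = (W ^ n) x := by
    intro n x
    rw [Module.End.pow_restrict, LinearMap.restrict_apply]
    change ((W : H →ₗ[ℂ] H) ^ n) x = (W ^ n) x
    rw [← toLinearMap_pow, coe_coe]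
  have hw_apply : ∀ x, (w x : H) = W x := fun _ => rfl
  have hWN := pow_mul_eq_of_mul_eq hWP hN
  have hpow : (1 - ‖P - adjoint (W ^ N) * W ^ N‖) ^ finrank ℂ (LinearMap.range (P : H →ₗ[ℂ] H)) ≤
      (‖w.det‖ ^ 2) ^ N := by
    rw [← pow_mul, mul_comm, pow_mul, ← norm_pow, ← map_pow]
    refine LinearMap.pow_finrank_le_norm_det_sq _
      (sub_nonneg.2 (norm_sub_adjoint_mul_self_le_one hP hWN (norm_pow_le_one hW N))) fun x => ?_
    rw [Submodule.coe_norm, Submodule.coe_norm, hw_pow]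
    exact (norm_sub_adjoint_mul_self_le_iff hP hWN (norm_pow_le_one hW N) (norm_nonneg _)).1
      le_rfl x x.2
  have hw : ∀ x, ‖w x‖ ≤ ‖x‖ := fun x =>
    calc ‖w x‖ = ‖W x‖ := rfl
      _ ≤ ‖P x‖ := norm_apply_le_norm_apply_of_mul_eq hWP hW x
      _ = ‖x‖ := by rw [(IsIdempotentElem.mem_range_iff hP.isIdempotentElem).1 x.2]; rfl
  have hg : ‖P - adjoint W * W‖ ≤ 1 - ‖w.det‖ ^ 2 := by
    refine (norm_sub_adjoint_mul_self_le_iff hP hWP hW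
      (sub_nonneg.2 (pow_le_one₀ (norm_nonneg _) (LinearMap.norm_det_le_one hw)))).2 fun x hx => ?_
    simpa [Submodule.coe_norm, hw_apply] using LinearMap.norm_det_sq_mul_norm_sq_le hw ⟨x, hx⟩
  exact hpow.trans (pow_le_pow_left₀ (sq_nonneg _) (by linarith) N)

end ContinuousLinearMap

theorem mul_le_neg_mul_log_of_pow_le {g D : ℝ} {N d : ℕ} (hg : g ≤ 1) (hD : D < 1)
    (h : (1 - D) ^ d ≤ (1 - g) ^ N) : N * g ≤ -(d * Real.log (1 - D)) := by
  have hexp : (1 - g) ^ N ≤ Real.exp (-(N * g)) := by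
    rw [neg_mul_eq_mul_neg, Real.exp_nat_mul]
    exact pow_le_pow_left₀ (by linarith) (by linarith [Real.add_one_le_exp (-g)]) N
  have := Real.log_le_log (pow_pos (by linarith) d) (h.trans hexp)
  rw [Real.log_pow, Real.log_exp] at this
  linarith

theorem one_le_two_mul_floor_inv_mul {y : ℝ} (hy : 0 < y) (hy1 : y ≤ 1) :
    1 ≤ 2 * ⌊y⁻¹⌋₊ * y := by
  have hfloor : (1 : ℝ) ≤ ⌊y⁻¹⌋₊ := by
    exact_mod_cast (Nat.one_le_floor_iff _).2 (one_le_inv_iff₀.2 ⟨hy, hy1⟩)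
  have := Nat.lt_floor_add_one y⁻¹
  rw [inv_lt_iff_one_lt_mul₀ hy] at this
  nlinarith

section Compression

variable {H : Type*} [NormedAddCommGroup H] [InnerProductSpace ℂ H] [CompleteSpace H]
  {P : H →L[ℂ] H} {V : ℝ → H →L[ℂ] H}

theorem tendstoUniformlyOn_adjoint_pow_mul_pow (hP : IsStarProjection P)
    (hVP : ∀ s, V s * P = V s) (hPV : ∀ s, P * V s = V s) (hV : ∀ s, ‖V s‖ ≤ 1) (hV0 : V 0 = P)
    (h : Tendsto (fun s : ℝ => ‖adjoint (V s) * V s - P‖ / |s|) (𝓝[≠] 0) (𝓝 0))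
    {T : ℝ} (hT : 0 < T) :
    TendstoUniformlyOn (fun (N : ℕ) (t : ℝ) => adjoint (V (t / N) ^ N) * V (t / N) ^ N)
      (fun _ => P) atTop (Set.Icc (-T) T) := by
  rw [Metric.tendstoUniformlyOn_iff]
  intro ε hε
  obtain ⟨δ, hδ, hsmall⟩ := Metric.tendsto_nhdsWithin_nhds.1 h (ε / (2 * T)) (by positivity)
  have hg : ∀ s, |s| < δ → ‖P - adjoint (V s) * V s‖ ≤ ε / (2 * T) * |s| := by
    intro s hs
    rcases eq_or_ne s 0 with rfl | hs0
    · rw [hV0, ← star_eq_adjoint, hP.isSelfAdjoint.star_eq, hP.isIdempotentElem.eq]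
      simp
    · have := hsmall hs0 (by rwa [Real.dist_eq, sub_zero])
      rw [Real.dist_eq, sub_zero, abs_of_nonneg (by positivity), div_lt_iff₀ (abs_pos.2 hs0),
        norm_sub_rev] at this
      exact this.le
  filter_upwards [tendsto_natCast_atTop_atTop.eventually_gt_atTop (T / δ),
    eventually_ne_atTop 0] with N hN hN0 t ht
  have hNpos : (0 : ℝ) < N := by positivity
  have ht' : |t| ≤ T := abs_le.2 ht
  have hs : |t / N| < δ := by
    rw [abs_div, Nat.abs_cast, div_lt_iff₀ hNpos]
    rw [div_lt_iff₀ hδ] at hN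
    linarith
  rw [dist_eq_norm]
  calc ‖P - adjoint (V (t / N) ^ N) * V (t / N) ^ N‖
      ≤ N * ‖P - adjoint (V (t / N)) * V (t / N)‖ :=
        norm_sub_adjoint_pow_mul_pow_le hP (hVP _) (hPV _) (hV _) hN0
    _ ≤ N * (ε / (2 * T) * |t / N|) := by gcongr; exact hg _ hs
    _ = ε / (2 * T) * |t| := by rw [abs_div, Nat.abs_cast]; field_simp
    _ ≤ ε / (2 * T) * T := by gcongr
    _ < ε := by field_simp; linarith

theorem tendsto_norm_adjoint_mul_self_sub_div_abs (hP : IsStarProjection P)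
    [FiniteDimensional ℂ (LinearMap.range (P : H →ₗ[ℂ] H))]
    (hVP : ∀ s, V s * P = V s) (hPV : ∀ s, P * V s = V s) (hV : ∀ s, ‖V s‖ ≤ 1)
    (h : TendstoUniformlyOn (fun (N : ℕ) (t : ℝ) => adjoint (V (t / N) ^ N) * V (t / N) ^ N)
      (fun _ => P) atTop (Set.Icc (-1) 1)) :
    Tendsto (fun s : ℝ => ‖adjoint (V s) * V s - P‖ / |s|) (𝓝[≠] 0) (𝓝 0) := by
  set d := finrank ℂ (LinearMap.range (P : H →ₗ[ℂ] H))
  -- For `s → 0` take `N = ⌊1/|s|⌋` steps of length `s`, so that `t = N s` stays in `[-1, 1]`.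
  set n : ℝ → ℕ := fun s => ⌊|s|⁻¹⌋₊
  set D : ℝ → ℝ := fun s => ‖P - adjoint (V s ^ n s) * V s ^ n s‖
  have hsmall : ∀ᶠ s in 𝓝[≠] (0 : ℝ), 0 < |s| ∧ |s| ≤ 1 :=
    (tendsto_norm_nhdsNE_zero.eventually (Ioc_mem_nhdsGT zero_lt_one)).mono fun s hs => hs
  have hn : ∀ᶠ s in 𝓝[≠] (0 : ℝ), 1 ≤ 2 * n s * |s| ∧ n s ≠ 0 := hsmall.mono fun s hs => by
    have : 1 ≤ 2 * (n s : ℝ) * |s| := one_le_two_mul_floor_inv_mul hs.1 hs.2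
    exact ⟨this, fun h0 => by rw [h0] at this; norm_num at this⟩
  have hD : Tendsto D (𝓝[≠] 0) (𝓝 0) := by
    have hn_top : Tendsto n (𝓝[≠] 0) atTop :=
      tendsto_nat_floor_atTop.comp (tendsto_norm_nhdsNE_zero.inv_tendsto_nhdsGT_zero)
    refine Metric.tendsto_nhds.2 fun ε hε => ?_
    filter_upwards [hn_top.eventually (Metric.tendstoUniformlyOn_iff.1 h ε hε), hsmall, hn]
      with s hs hs1 hns
    have ht : (n s * s : ℝ) ∈ Set.Icc (-1) 1 := by
      rw [Set.mem_Icc, ← abs_le, abs_mul, Nat.abs_cast, ← le_div_iff₀ hs1.1, one_div]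
      exact Nat.floor_le (by positivity)
    have := hs _ ht
    rw [mul_div_cancel_left₀ _ (Nat.cast_ne_zero.2 hns.2), dist_eq_norm] at this
    simpa [D] using this
  have hlim : Tendsto (fun s => 2 * -(d * Real.log (1 - D s))) (𝓝[≠] 0) (𝓝 0) := by
    have : Tendsto (fun s => 1 - D s) (𝓝[≠] 0) (𝓝 1) := by simpa using hD.const_sub 1
    simpa using ((this.log one_ne_zero).const_mul (d : ℝ)).neg.const_mul 2
  refine squeeze_zero' (Eventually.of_forall fun s => by positivity) ?_ hlim
  filter_upwards [hsmall, hn, hD.eventually (eventually_lt_nhds one_pos)] with s hs hns hD1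
  have hg1 := norm_sub_adjoint_mul_self_le_one hP (hVP s) (hV s)
  have key := mul_le_neg_mul_log_of_pow_le hg1 hD1
    (one_sub_norm_sub_adjoint_pow_mul_pow_pow_finrank_le hP (hVP s) (hPV s) (hV s) hns.2)
  rw [norm_sub_rev, div_le_iff₀ hs.1]
  nlinarith [hns.1, norm_nonneg (P - adjoint (V s) * V s)]

end Compression

theorem stmt_16_general {H : Type*} [NormedAddCommGroup H] [InnerProductSpace ℂ H] [CompleteSpace H]
    (U : ℝ → H →L[ℂ] H) (hU0 : U 0 = 1)
    (hUunitary : ∀ t : ℝ, adjoint (U t) * U t = 1 ∧ U t * adjoint (U t) = 1)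
    (P : H →L[ℂ] H) (hPsa : adjoint P = P) (hPidem : P * P = P)
    (hPfin : FiniteDimensional ℂ (LinearMap.range (P : H →ₗ[ℂ] H)))
    (V : ℝ → H →L[ℂ] H) (hV : ∀ s : ℝ, V s = P * U s * P) :
    Tendsto (fun s : ℝ => ‖adjoint (V s) * V s - P‖ / |s|) (𝓝[≠] 0) (𝓝 0) ↔
      ∀ T > (0 : ℝ),
        TendstoUniformlyOn
          (fun (N : ℕ) (t : ℝ) => adjoint (V (t / N) ^ N) * V (t / N) ^ N)
          (fun _ => P) atTop (Set.Icc (-T) T) := by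
  have hP : IsStarProjection P := ⟨hPidem, (star_eq_adjoint P).trans hPsa⟩
  have hVP : ∀ s, V s * P = V s := fun s => by rw [hV, mul_assoc, hPidem]
  have hPV : ∀ s, P * V s = V s := fun s => by rw [hV, ← mul_assoc, ← mul_assoc, hPidem]
  have hU : ∀ s, ‖U s‖ ≤ 1 := fun s => opNorm_le_bound _ zero_le_one fun x => by
    rw [one_mul, (U s).norm_map_iff_adjoint_comp_self.2 (hUunitary s).1 x]
  have hVnorm : ∀ s, ‖V s‖ ≤ 1 := fun s => by
    rw [hV]
    refine (norm_mul_le _ _).trans (mul_le_one₀ ((norm_mul_le _ _).trans ?_) (norm_nonneg _)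
      (hP.norm_le P))
    exact mul_le_one₀ (hP.norm_le P) (norm_nonneg _) (hU s)
  have hV0 : V 0 = P := by rw [hV, hU0, mul_one, hPidem]
  exact ⟨fun h T hT => tendstoUniformlyOn_adjoint_pow_mul_pow hP hVP hPV hVnorm hV0 h hT,
    fun h => tendsto_norm_adjoint_mul_self_sub_div_abs hP hVP hPV hVnorm (h 1 one_pos)⟩

theorem stmt_16 {H : Type*} [NormedAddCommGroup H] [InnerProductSpace ℂ H] [CompleteSpace H]
    (U : ℝ → H →L[ℂ] H) (hU0 : U 0 = 1) (hUadd : ∀ t s : ℝ, U (t + s) = U t * U s)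
    (hUunitary : ∀ t : ℝ, adjoint (U t) * U t = 1 ∧ U t * adjoint (U t) = 1)
    (hUcont : ∀ x : H, Continuous fun t : ℝ => U t x)
    (P : H →L[ℂ] H) (hPsa : adjoint P = P) (hPidem : P * P = P)
    (hPfin : FiniteDimensional ℂ (LinearMap.range (P : H →ₗ[ℂ] H)))
    (V : ℝ → H →L[ℂ] H) (hV : ∀ s : ℝ, V s = P * U s * P) :
    Tendsto (fun s : ℝ => ‖adjoint (V s) * V s - P‖ / |s|) (𝓝[≠] 0) (𝓝 0) ↔
      ∀ T > (0 : ℝ),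
        TendstoUniformlyOn
          (fun (N : ℕ) (t : ℝ) => adjoint (V (t / N) ^ N) * V (t / N) ^ N)
          (fun _ => P) atTop (Set.Icc (-T) T) :=
  stmt_16_general U hU0 hUunitary P hPsa hPidem hPfin V hV
end

section
/- Let H be a complex Hilbert space, U : ℝ → B(H) a strongly continuous one-parameter unitary group, P a finite-rank orthogonal projection on H, and H_Z a bounded self-adjoint operator with H_Z = P H_Z P. Define V(s) = P U(s) P and V_N(t) = (V(t/N))^N. Then the following are equivalent: (a) ‖(V(s) − P)/s + iH_Z‖ → 0 as s → 0 (i.e. s ↦ V(s) is differentiable at s = 0 in operator norm with derivative −iH_Z); (b) for every T > 0, sup_{|t|≤T} ‖V_N(t) − P·exp(−itH_Z)‖ → 0 as N → +∞. -/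
/-!
Put `W t = P exp(-itH_Z)`. Since `P` commutes with `H_Z`, `W` is a group of contractions on the
range of `P` with `W'(0) = -iH_Z` and `W(t/N)^N = W t`, so (a) says exactly that
`V s - W s = o(s)`.

(a) ⇒ (b): `‖V(t/N)^N - W(t/N)^N‖ ≤ N ‖V(t/N) - W(t/N)‖ = N o(t/N)`.

(b) ⇒ (a): fix a small `s`, put `Δ = V s - W s` and `k = ⌊ρ/|s|⌋`, where `ρ` is so small that
`‖W u - P‖ ≤ 1/16` for `|u| ≤ ρ`. In the telescoping sum `V(s)^k - W(s)^k = ∑ W(s)^(k-1-j) Δ V(s)^j`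
every term is `Δ` up to `‖Δ‖ (‖V(s)^j - W(s)^j‖ + 1/8)`. By (b) the left side, and the differences
with `j ≥ N₀`, are at most `η`; the others are at most `N₀ ‖Δ‖`. For `k ≥ 16 N₀²` this gives
`k ‖Δ‖ ≤ 2η`, i.e. `‖Δ‖ ≤ 4η|s|/ρ`.
-/

open Filter Topology Finset Asymptotics NormedSpace

section NormedRing

variable {A : Type*} [NormedRing A]

theorem pow_sub_pow_eq_sum (a b : A) (n : ℕ) :
    a ^ n - b ^ n = ∑ j ∈ range n, b ^ (n - 1 - j) * (a - b) * a ^ j := by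
  have h := sum_range_sub (fun j => b ^ (n - j) * a ^ j) n
  simp only [Nat.sub_self, pow_zero, one_mul, Nat.sub_zero, mul_one] at h
  rw [← h]
  refine sum_congr rfl fun j hj => ?_
  obtain ⟨m, rfl⟩ : ∃ m, n = m + j + 1 := ⟨n - 1 - j, by grind⟩
  rw [show m + j + 1 - (j + 1) = m by omega, show m + j + 1 - j = m + 1 by omega,
    show m + j + 1 - 1 - j = m by omega, pow_succ' a, pow_succ b]
  noncomm_ring

theorem norm_pow_le_one (h1 : ‖(1 : A)‖ ≤ 1) {a : A} (ha : ‖a‖ ≤ 1) (n : ℕ) : ‖a ^ n‖ ≤ 1 := by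
  rcases n.eq_zero_or_pos with rfl | hn
  · simpa using h1
  · exact (norm_pow_le' a hn).trans (pow_le_one₀ (norm_nonneg a) ha)

theorem norm_pow_sub_pow_le (h1 : ‖(1 : A)‖ ≤ 1) {a b : A} (ha : ‖a‖ ≤ 1) (hb : ‖b‖ ≤ 1)
    (n : ℕ) : ‖a ^ n - b ^ n‖ ≤ n * ‖a - b‖ := by
  rw [pow_sub_pow_eq_sum]
  calc ‖∑ j ∈ range n, b ^ (n - 1 - j) * (a - b) * a ^ j‖
      ≤ ∑ j ∈ range n, ‖b ^ (n - 1 - j) * (a - b) * a ^ j‖ := norm_sum_le _ _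
    _ ≤ ∑ _j ∈ range n, ‖a - b‖ := by
      gcongr with j
      calc ‖b ^ (n - 1 - j) * (a - b) * a ^ j‖ ≤ ‖b ^ (n - 1 - j)‖ * ‖a - b‖ * ‖a ^ j‖ :=
            norm_mul₃_le
        _ ≤ 1 * ‖a - b‖ * 1 := by
          gcongr
          exacts [norm_pow_le_one h1 hb _, norm_pow_le_one h1 ha _]
        _ = ‖a - b‖ := by ring
    _ = n * ‖a - b‖ := by simp

theorem norm_mul_mul_sub_le {P x : A} (hPx : P * x = x) (hxP : x * P = x) (u v : A)
    (hv : ‖v‖ ≤ 1) : ‖u * x * v - x‖ ≤ (‖u * P - P‖ + ‖P * v - P‖) * ‖x‖ := by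
  have key : u * x * v - x = (u * P - P) * x * v + x * (P * v - P) := by
    calc u * x * v - x = u * (P * x) * v - (P * x) * v + (x * P) * v - x * P := by
          rw [hPx, hxP]; abel
      _ = _ := by noncomm_ring
  rw [key]
  calc ‖(u * P - P) * x * v + x * (P * v - P)‖
      ≤ ‖u * P - P‖ * ‖x‖ * ‖v‖ + ‖x‖ * ‖P * v - P‖ :=
        (norm_add_le _ _).trans (add_le_add norm_mul₃_le (norm_mul_le _ _))
    _ ≤ ‖u * P - P‖ * ‖x‖ * 1 + ‖x‖ * ‖P * v - P‖ := by gcongr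
    _ = _ := by ring

theorem sum_norm_pow_sub_pow_le (h1 : ‖(1 : A)‖ ≤ 1) {a b : A} (ha : ‖a‖ ≤ 1) (hb : ‖b‖ ≤ 1)
    {k N₀ : ℕ} {η : ℝ} (hk : N₀ ≤ k) (hpow : ∀ i, N₀ ≤ i → i ≤ k → ‖a ^ i - b ^ i‖ ≤ η) :
    ∑ j ∈ range k, ‖a ^ j - b ^ j‖ ≤ N₀ ^ 2 * ‖a - b‖ + k * η := by
  have hη : 0 ≤ η := (norm_nonneg _).trans (hpow N₀ le_rfl hk)
  rw [← sum_range_add_sum_Ico _ hk]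
  have h_small : ∑ j ∈ range N₀, ‖a ^ j - b ^ j‖ ≤ ∑ _j ∈ range N₀, N₀ * ‖a - b‖ := by
    refine sum_le_sum fun j hj => (norm_pow_sub_pow_le h1 ha hb j).trans ?_
    gcongr
    exact (mem_range.1 hj).le
  have h_large : ∑ j ∈ Ico N₀ k, ‖a ^ j - b ^ j‖ ≤ ∑ _j ∈ Ico N₀ k, η :=
    sum_le_sum fun j hj => hpow j (mem_Ico.1 hj).1 (mem_Ico.1 hj).2.le
  have h_card : ((k - N₀ : ℕ) : ℝ) * η ≤ k * η := by gcongr; exact Nat.cast_le.2 (Nat.sub_le _ _)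
  simp only [sum_const, card_range, Nat.card_Ico, nsmul_eq_mul] at h_small h_large
  nlinarith

variable [NormedSpace ℝ A]

theorem nat_mul_norm_sub_le (h1 : ‖(1 : A)‖ ≤ 1) {a b P : A} (ha : ‖a‖ ≤ 1) (hb : ‖b‖ ≤ 1)
    (hPΔ : P * (a - b) = a - b) (hΔP : (a - b) * P = a - b) {k N₀ : ℕ} {η ε : ℝ}
    (hbP : ∀ m < k, ‖b ^ m * P - P‖ ≤ ε ∧ ‖P * b ^ m - P‖ ≤ ε) (hk : N₀ ≤ k)
    (hpow : ∀ i, N₀ ≤ i → i ≤ k → ‖a ^ i - b ^ i‖ ≤ η) :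
    k * ‖a - b‖ ≤ η + ‖a - b‖ * (N₀ ^ 2 * ‖a - b‖ + k * η) + k * (2 * ε) * ‖a - b‖ := by
  set Δ := a - b
  have h_split : k • Δ = (a ^ k - b ^ k) - (∑ j ∈ range k, b ^ (k - 1 - j) * Δ * (a ^ j - b ^ j)
      + ∑ j ∈ range k, (b ^ (k - 1 - j) * Δ * b ^ j - Δ)) := by
    rw [pow_sub_pow_eq_sum, ← sum_add_distrib, ← sum_sub_distrib, ← card_range k, ← sum_const,
      card_range]
    refine sum_congr rfl fun j _ => ?_
    simp only [Δ]
    noncomm_ring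
  have h_first : ∀ j ∈ range k, ‖b ^ (k - 1 - j) * Δ * (a ^ j - b ^ j)‖ ≤ ‖Δ‖ * ‖a ^ j - b ^ j‖ :=
    fun j _ => norm_mul₃_le.trans <| by
      grw [norm_pow_le_one h1 hb, one_mul]
  have h_second : ∀ j ∈ range k, ‖b ^ (k - 1 - j) * Δ * b ^ j - Δ‖ ≤ 2 * ε * ‖Δ‖ := by
    intro j hj
    have hj := mem_range.1 hj
    refine (norm_mul_mul_sub_le hPΔ hΔP _ _ (norm_pow_le_one h1 hb j)).trans ?_
    gcongr
    linarith [(hbP (k - 1 - j) (by omega)).1, (hbP j hj).2]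
  calc (k : ℝ) * ‖Δ‖ = ‖k • Δ‖ := by rw [RCLike.norm_nsmul ℝ, nsmul_eq_mul]
    _ ≤ ‖a ^ k - b ^ k‖ + (∑ j ∈ range k, ‖b ^ (k - 1 - j) * Δ * (a ^ j - b ^ j)‖
        + ∑ j ∈ range k, ‖b ^ (k - 1 - j) * Δ * b ^ j - Δ‖) := by
      rw [h_split]
      refine (norm_sub_le _ _).trans ?_
      gcongr
      exact (norm_add_le _ _).trans (add_le_add (norm_sum_le _ _) (norm_sum_le _ _))
    _ ≤ η + (‖Δ‖ * ∑ j ∈ range k, ‖a ^ j - b ^ j‖ + ∑ _j ∈ range k, 2 * ε * ‖Δ‖) := by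
      rw [mul_sum]
      gcongr with j hj j hj
      exacts [hpow k hk le_rfl, h_first j hj, h_second j hj]
    _ ≤ η + ‖Δ‖ * (N₀ ^ 2 * ‖Δ‖ + k * η) + k * (2 * ε) * ‖Δ‖ := by
      grw [sum_norm_pow_sub_pow_le h1 ha hb hk hpow]
      simp only [sum_const, card_range, nsmul_eq_mul]
      linarith

theorem nat_mul_norm_sub_le_two_mul (h1 : ‖(1 : A)‖ ≤ 1) {a b P : A} (ha : ‖a‖ ≤ 1)
    (hb : ‖b‖ ≤ 1) (hPΔ : P * (a - b) = a - b) (hΔP : (a - b) * P = a - b) {k N₀ : ℕ} {η : ℝ}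
    (hbP : ∀ m < k, ‖b ^ m * P - P‖ ≤ 1 / 16 ∧ ‖P * b ^ m - P‖ ≤ 1 / 16) (hk : 16 * N₀ ^ 2 ≤ k)
    (hη : η ≤ 1 / 4) (hpow : ∀ i, N₀ ≤ i → i ≤ k → ‖a ^ i - b ^ i‖ ≤ η) :
    k * ‖a - b‖ ≤ 2 * η := by
  have hN₀k : N₀ ≤ k := by nlinarith
  have h := nat_mul_norm_sub_le h1 ha hb hPΔ hΔP hbP hN₀k hpow
  have hΔ : ‖a - b‖ ≤ 2 := (norm_sub_le _ _).trans (by linarith)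
  have hk' : 16 * (N₀ : ℝ) ^ 2 ≤ k := by exact_mod_cast hk
  have hΔ0 := norm_nonneg (a - b)
  have h_quad : ‖a - b‖ * (N₀ ^ 2 * ‖a - b‖) ≤ k / 8 * ‖a - b‖ := by
    have : ‖a - b‖ * (N₀ ^ 2 * ‖a - b‖) ≤ 2 * (N₀ ^ 2 * ‖a - b‖) := by gcongr
    nlinarith
  have h_lin : ‖a - b‖ * (k * η) ≤ k / 4 * ‖a - b‖ := by
    have : (k : ℝ) * η ≤ k / 4 := by nlinarith [(Nat.cast_nonneg k : (0 : ℝ) ≤ k)]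
    nlinarith
  nlinarith

end NormedRing

section PowerApproximation

variable {A : Type*} [NormedRing A] {P : A} {V W : ℝ → A}

theorem pow_eq_of_map_add (hWadd : ∀ a b, W (a + b) = W a * W b) (s : ℝ) {n : ℕ} (hn : 1 ≤ n) :
    W s ^ n = W (n * s) := by
  induction n, hn using Nat.le_induction with
  | base => simp
  | succ n _ ih => rw [pow_succ, ih, ← hWadd]; push_cast; ring_nf

theorem pow_mul_eq_of_map_add (hWadd : ∀ a b, W (a + b) = W a * W b) (hW0 : W 0 = P) (s : ℝ)
    (n : ℕ) : W s ^ n * P = W (n * s) ∧ P * W s ^ n = W (n * s) := by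
  rcases n.eq_zero_or_pos with rfl | hn
  · simp [hW0]
  · rw [pow_eq_of_map_add hWadd s hn, ← hW0, ← hWadd, ← hWadd, add_zero, zero_add]
    exact ⟨rfl, rfl⟩

theorem tendstoUniformlyOn_pow_div_of_isLittleO (h1 : ‖(1 : A)‖ ≤ 1) (hV : ∀ s, ‖V s‖ ≤ 1)
    (hW : ∀ s, ‖W s‖ ≤ 1) (hWadd : ∀ a b, W (a + b) = W a * W b)
    (hVW : (fun s => V s - W s) =o[𝓝 0] fun s => s) (T : ℝ) :
    TendstoUniformlyOn (fun (N : ℕ) t => V (t / N) ^ N) W atTop (Set.Icc (-T) T) := by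
  rw [Metric.tendstoUniformlyOn_iff]
  intro ε hε
  have hc : 0 < ε / (|T| + 1) := by positivity
  obtain ⟨δ, hδ, hsmall⟩ := Metric.eventually_nhds_iff.1 (hVW.def hc)
  filter_upwards [eventually_ge_atTop 1,
    tendsto_natCast_atTop_atTop.eventually_gt_atTop (|T| / δ)] with N hN hNδ t ht
  have hN0 : (0 : ℝ) < N := by exact_mod_cast hN
  have htT : |t| ≤ |T| := (abs_le.2 ⟨ht.1, ht.2⟩).trans (le_abs_self T)
  have hs : dist (t / N) 0 < δ := by
    rw [dist_zero_right, norm_div, Real.norm_eq_abs, RCLike.norm_natCast, div_lt_iff₀ hN0]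
    rw [div_lt_iff₀ hδ] at hNδ
    linarith
  calc dist (W t) (V (t / N) ^ N) = ‖V (t / N) ^ N - W (t / N) ^ N‖ := by
        rw [dist_comm, dist_eq_norm, pow_eq_of_map_add hWadd _ hN, mul_div_cancel₀ _ hN0.ne']
    _ ≤ N * ‖V (t / N) - W (t / N)‖ := norm_pow_sub_pow_le h1 (hV _) (hW _) N
    _ ≤ N * (ε / (|T| + 1) * ‖t / N‖) := by gcongr; exact hsmall hs
    _ = ε / (|T| + 1) * |t| := by
        rw [norm_div, Real.norm_eq_abs, RCLike.norm_natCast]; field_simp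
    _ < ε := by
        rw [div_mul_eq_mul_div, div_lt_iff₀ (by positivity)]
        nlinarith

variable [NormedSpace ℝ A]

theorem nat_mul_norm_sub_le_of_forall_dist_lt (h1 : ‖(1 : A)‖ ≤ 1) (hV : ∀ s, ‖V s‖ ≤ 1)
    (hW : ∀ s, ‖W s‖ ≤ 1) (hPV : ∀ s, P * V s = V s) (hVP : ∀ s, V s * P = V s)
    (hWadd : ∀ a b, W (a + b) = W a * W b) (hW0 : W 0 = P) {N₀ k : ℕ} {η s : ℝ} (hN₀ : 1 ≤ N₀)
    (hη : η ≤ 1 / 4) (hk : 16 * N₀ ^ 2 ≤ k) (hks : k * |s| ≤ 1)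
    (hW_near : ∀ u, |u| ≤ k * |s| → ‖W u - P‖ ≤ 1 / 16)
    (hconv : ∀ N ≥ N₀, ∀ t ∈ Set.Icc (-1 : ℝ) 1, dist (W t) (V (t / N) ^ N) < η) :
    k * ‖V s - W s‖ ≤ 2 * η := by
  have h_le : ∀ m : ℕ, m ≤ k → |m * s| ≤ k * |s| := fun m hm => by
    rw [abs_mul, Nat.abs_cast]; gcongr
  have hPW : P * W s = W s := by rw [← hW0, ← hWadd, zero_add]
  have hWP : W s * P = W s := by rw [← hW0, ← hWadd, add_zero]
  refine nat_mul_norm_sub_le_two_mul h1 (hV s) (hW s) (by rw [mul_sub, hPV, hPW])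
    (by rw [sub_mul, hVP, hWP]) (fun m hm => ?_) hk hη (fun i hi hik => ?_)
  · obtain ⟨h₁, h₂⟩ := pow_mul_eq_of_map_add hWadd hW0 s m
    rw [h₁, h₂]
    exact ⟨hW_near _ (h_le m hm.le), hW_near _ (h_le m hm.le)⟩
  · have hi1 : 1 ≤ i := hN₀.trans hi
    have h_mem : (i : ℝ) * s ∈ Set.Icc (-1 : ℝ) 1 := abs_le.1 ((h_le i hik).trans hks)
    have h := hconv i hi _ h_mem
    rw [mul_div_cancel_left₀ _ (by positivity), dist_comm, dist_eq_norm,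
      ← pow_eq_of_map_add hWadd s hi1] at h
    exact h.le

theorem isLittleO_of_tendstoUniformlyOn_pow_div (h1 : ‖(1 : A)‖ ≤ 1) (hV : ∀ s, ‖V s‖ ≤ 1)
    (hW : ∀ s, ‖W s‖ ≤ 1) (hPV : ∀ s, P * V s = V s) (hVP : ∀ s, V s * P = V s) (hV0 : V 0 = P)
    (hWadd : ∀ a b, W (a + b) = W a * W b) (hW0 : W 0 = P)
    (hW_bigO : (fun u => W u - P) =O[𝓝 0] fun u => u)
    (hconv : TendstoUniformlyOn (fun (N : ℕ) t => V (t / N) ^ N) W atTop (Set.Icc (-1) 1)) :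
    (fun s => V s - W s) =o[𝓝 0] fun s => s := by
  obtain ⟨ρ, hρ, hρ1, hW_near⟩ : ∃ ρ > 0, ρ ≤ 1 ∧ ∀ u, |u| ≤ ρ → ‖W u - P‖ ≤ 1 / 16 := by
    obtain ⟨C, hC, hCW⟩ := hW_bigO.exists_pos
    obtain ⟨δ, hδ, hWδ⟩ := Metric.eventually_nhds_iff.1 hCW.bound
    refine ⟨min 1 (min (δ / 2) (1 / (16 * C))), by positivity, min_le_left _ _, fun u hu => ?_⟩
    have hu₁ : |u| ≤ δ / 2 := hu.trans ((min_le_right _ _).trans (min_le_left _ _))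
    have hu₂ : |u| ≤ 1 / (16 * C) := hu.trans ((min_le_right _ _).trans (min_le_right _ _))
    calc ‖W u - P‖ ≤ C * |u| := hWδ (by rw [Real.dist_0_eq_abs]; linarith)
      _ ≤ C * (1 / (16 * C)) := by gcongr
      _ = 1 / 16 := by field_simp
  rw [isLittleO_iff]
  intro c hc
  set η := min (1 / 4) (c * ρ / 4)
  obtain ⟨N₀, hN₀⟩ := eventually_atTop.1 (Metric.tendstoUniformlyOn_iff.1 hconv η (by positivity))
  set N₁ := max N₀ 1
  filter_upwards [Metric.ball_mem_nhds (0 : ℝ) (show 0 < ρ / (16 * N₁ ^ 2 + 2) by positivity)]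
    with s hs
  rcases eq_or_ne s 0 with rfl | hs0
  · simp [hV0, hW0]
  have hs_pos : 0 < |s| := abs_pos.2 hs0
  rw [Metric.mem_ball, Real.dist_0_eq_abs, lt_div_iff₀ (by positivity), ← lt_div_iff₀' hs_pos] at hs
  set k := ⌊ρ / |s|⌋₊
  have hks : k * |s| ≤ ρ := (le_div_iff₀ hs_pos).1 (Nat.floor_le (by positivity))
  have hk : 16 * N₁ ^ 2 ≤ k := Nat.le_floor (by push_cast; linarith)
  have hk1 : (1 : ℝ) ≤ k := by exact_mod_cast le_trans (Nat.one_le_iff_ne_zero.2 (by positivity)) hk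
  have hρk : ρ < 2 * k * |s| := by
    have := (div_lt_iff₀ hs_pos).1 (Nat.lt_floor_add_one (ρ / |s|))
    nlinarith
  have h_main := nat_mul_norm_sub_le_of_forall_dist_lt h1 hV hW hPV hVP hWadd hW0
    (le_max_right N₀ 1) (min_le_left _ _) hk (hks.trans hρ1)
    (fun u hu => hW_near u (hu.trans hks)) (fun N hN => hN₀ N ((le_max_left _ _).trans hN))
  have hη : η ≤ c * ρ / 4 := min_le_right _ _
  rw [Real.norm_eq_abs]
  refine le_of_mul_le_mul_left ?_ (zero_lt_one.trans_le hk1)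
  nlinarith

end PowerApproximation

section Calculus

variable {𝕜 F : Type*} [NontriviallyNormedField 𝕜] [NormedAddCommGroup F] [NormedSpace 𝕜 F]

theorem HasDerivAt.hasDerivAt_iff_isLittleO_sub {f g : 𝕜 → F} {f' : F} {x : 𝕜}
    (hg : HasDerivAt g f' x) (hfg : f x = g x) :
    HasDerivAt f f' x ↔ (fun y => f y - g y) =o[𝓝 x] fun y => y - x := by
  constructor
  · intro hf
    have h₀ : HasDerivAt (fun y => f y - g y) 0 x := (hf.sub hg).congr_deriv (sub_self f')
    simpa [hfg] using hasDerivAt_iff_isLittleO.1 h₀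
  · intro h
    have h₀ : HasDerivAt (fun y => f y - g y) 0 x := hasDerivAt_iff_isLittleO.2 (by simpa [hfg])
    convert h₀.add hg using 1
    · ext; simp
    · simp

end Calculus

section CompressedExp

variable {A : Type*} [NormedRing A] [NormedAlgebra ℂ A] {P x : A}

omit [NormedRing A] [NormedAlgebra ℂ A] in
theorem neg_I_mul_smul_eq {M : Type*} [AddCommGroup M] [Module ℂ M] (t : ℝ) (x : M) :
    (-(Complex.I * t)) • x = t • (-(Complex.I • x)) := by
  rw [← Complex.coe_smul, smul_neg, smul_smul, ← neg_smul, mul_comm]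

variable [CompleteSpace A]

theorem exp_neg_I_mul_smul_add (x : A) (a b : ℝ) :
    exp ((-(Complex.I * ↑(a + b))) • x) =
      exp ((-(Complex.I * a)) • x) * exp ((-(Complex.I * b)) • x) := by
  simp only [neg_I_mul_smul_eq, add_smul]
  exact exp_add_of_commute_of_mem_ball (𝕂 := ℝ)
    (((Commute.refl (-(Complex.I • x))).smul_left a).smul_right b)
    ((expSeries_radius_eq_top ℝ A).symm ▸ edist_lt_top _ _)
    ((expSeries_radius_eq_top ℝ A).symm ▸ edist_lt_top _ _)

theorem mul_exp_neg_I_mul_smul_add (hP : IsIdempotentElem P) (hPx : Commute P x) (a b : ℝ) :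
    P * exp ((-(Complex.I * ↑(a + b))) • x) =
      P * exp ((-(Complex.I * a)) • x) * (P * exp ((-(Complex.I * b)) • x)) := by
  have hc : Commute P (exp ((-(Complex.I * a)) • x)) := (hPx.smul_right _).exp_right
  rw [exp_neg_I_mul_smul_add, ← mul_assoc, ← mul_assoc (P * _) P, mul_assoc P _ P, ← hc.eq,
    ← mul_assoc, hP.eq]

theorem hasDerivAt_mul_exp_neg_I_mul_smul (hPx : P * x = x) :
    HasDerivAt (fun t : ℝ => P * exp ((-(Complex.I * t)) • x)) (-(Complex.I • x)) 0 := by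
  have h := (hasDerivAt_exp_smul_const (𝕂 := ℝ) (-(Complex.I • x)) 0).const_mul P
  simp only [neg_I_mul_smul_eq]
  simpa [mul_smul_comm, hPx] using h

variable [StarRing A] [CStarRing A] [StarModule ℂ A]

theorem exp_neg_I_mul_smul_mem_unitary (hx : IsSelfAdjoint x) (t : ℝ) :
    exp ((-(Complex.I * t)) • x) ∈ unitary A := by
  have hx' : (-t) • x ∈ selfAdjoint A := (IsSelfAdjoint.all (-t)).smul hx
  convert (selfAdjoint.expUnitary ⟨_, hx'⟩).prop using 2
  simp [smul_smul, ← Complex.coe_smul]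

theorem norm_mul_exp_neg_I_mul_smul_le_one (hP : IsStarProjection P) (hx : IsSelfAdjoint x)
    (t : ℝ) : ‖P * exp ((-(Complex.I * t)) • x)‖ ≤ 1 := by
  rw [CStarRing.norm_mul_mem_unitary _ (exp_neg_I_mul_smul_mem_unitary hx t)]
  exact hP.norm_le

omit [NormedAlgebra ℂ A] [CompleteSpace A] [StarModule ℂ A] in
theorem norm_mul_mul_le_one {U : A} (hP : IsStarProjection P) (hU : U ∈ unitary A) :
    ‖P * U * P‖ ≤ 1 :=
  calc ‖P * U * P‖ ≤ ‖P * U‖ * ‖P‖ := norm_mul_le _ _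
    _ ≤ 1 * 1 := by
      rw [CStarRing.norm_mul_mem_unitary _ hU]
      gcongr <;> exact hP.norm_le
    _ = 1 := one_mul 1

end CompressedExp

open ContinuousLinearMap

theorem stmt_18_general {H : Type*} [NormedAddCommGroup H] [InnerProductSpace ℂ H] [CompleteSpace H]
    (U : ℝ → H →L[ℂ] H) (hU0 : U 0 = 1)
    (hUunitary : ∀ t : ℝ, adjoint (U t) * U t = 1 ∧ U t * adjoint (U t) = 1)
    (P : H →L[ℂ] H) (hPsa : adjoint P = P) (hPidem : P * P = P)
    (H_Z : H →L[ℂ] H) (hHsa : IsSelfAdjoint H_Z) (hHP : H_Z = P * H_Z * P)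
    (V : ℝ → H →L[ℂ] H) (hV : ∀ s : ℝ, V s = P * U s * P) :
    Tendsto (fun s : ℝ => ‖s⁻¹ • (V s - P) + Complex.I • H_Z‖) (𝓝[≠] 0) (𝓝 0) ↔
      ∀ T > (0 : ℝ),
        TendstoUniformlyOn (fun (N : ℕ) (t : ℝ) => V (t / N) ^ N)
          (fun t : ℝ => P * NormedSpace.exp ((-(Complex.I * t)) • H_Z))
          atTop (Set.Icc (-T) T) := by
  set W : ℝ → H →L[ℂ] H := fun t => P * NormedSpace.exp ((-(Complex.I * t)) • H_Z)
  have hP : IsStarProjection P := ⟨hPidem, by rwa [IsSelfAdjoint, star_eq_adjoint]⟩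
  have hPH : P * H_Z = H_Z := by rw [hHP, ← mul_assoc, ← mul_assoc, hPidem]
  have hHP' : H_Z * P = H_Z := by rw [hHP, mul_assoc, hPidem]
  have hPH_comm : Commute P H_Z := hPH.trans hHP'.symm
  have h1 : ‖(1 : H →L[ℂ] H)‖ ≤ 1 := norm_id_le
  have hV_norm : ∀ s, ‖V s‖ ≤ 1 := fun s => hV s ▸ norm_mul_mul_le_one hP
    (by rw [Unitary.mem_iff, star_eq_adjoint]; exact hUunitary s)
  have hW_norm : ∀ t, ‖W t‖ ≤ 1 := norm_mul_exp_neg_I_mul_smul_le_one hP hHsa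
  have hW_add : ∀ a b, W (a + b) = W a * W b := mul_exp_neg_I_mul_smul_add hPidem hPH_comm
  have hW0 : W 0 = P := by simp [W]
  have hV0 : V 0 = P := by rw [hV, hU0, mul_one, hPidem]
  have hW_deriv : HasDerivAt W (-(Complex.I • H_Z)) 0 := hasDerivAt_mul_exp_neg_I_mul_smul hPH
  calc _ ↔ HasDerivAt V (-(Complex.I • H_Z)) 0 := by
        simp [hasDerivAt_iff_tendsto_slope, tendsto_iff_norm_sub_tendsto_zero, slope_def_module,
          hV0]
    _ ↔ (fun s => V s - W s) =o[𝓝 0] fun s => s := by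
        simpa using hW_deriv.hasDerivAt_iff_isLittleO_sub (hV0.trans hW0.symm)
    _ ↔ _ := by
      refine ⟨fun h T _ => tendstoUniformlyOn_pow_div_of_isLittleO h1 hV_norm hW_norm hW_add h T,
        fun h => isLittleO_of_tendstoUniformlyOn_pow_div h1 hV_norm hW_norm ?_ ?_ hV0 hW_add hW0 ?_
          (h 1 one_pos)⟩
      · simp [hV, ← mul_assoc, hPidem]
      · simp [hV, mul_assoc, hPidem]
      · simpa [hW0] using hW_deriv.isBigO_sub

theorem stmt_18 {H : Type*} [NormedAddCommGroup H] [InnerProductSpace ℂ H] [CompleteSpace H]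
    (U : ℝ → H →L[ℂ] H) (hU0 : U 0 = 1) (hUadd : ∀ t s : ℝ, U (t + s) = U t * U s)
    (hUunitary : ∀ t : ℝ, adjoint (U t) * U t = 1 ∧ U t * adjoint (U t) = 1)
    (hUcont : ∀ x : H, Continuous fun t : ℝ => U t x)
    (P : H →L[ℂ] H) (hPsa : adjoint P = P) (hPidem : P * P = P)
    (hPfin : FiniteDimensional ℂ (LinearMap.range (P : H →ₗ[ℂ] H)))
    (H_Z : H →L[ℂ] H) (hHsa : IsSelfAdjoint H_Z) (hHP : H_Z = P * H_Z * P)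
    (V : ℝ → H →L[ℂ] H) (hV : ∀ s : ℝ, V s = P * U s * P) :
    Tendsto (fun s : ℝ => ‖s⁻¹ • (V s - P) + Complex.I • H_Z‖) (𝓝[≠] 0) (𝓝 0) ↔
      ∀ T > (0 : ℝ),
        TendstoUniformlyOn (fun (N : ℕ) (t : ℝ) => V (t / N) ^ N)
          (fun t : ℝ => P * NormedSpace.exp ((-(Complex.I * t)) • H_Z))
          atTop (Set.Icc (-T) T) :=
  stmt_18_general U hU0 hUunitary P hPsa hPidem H_Z hHsa hHP V hV
end
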